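/- arXiv:2402.05304 — 8 statements merged into one kernel-verified Lean document; each statement's English description precedes it below -/
import Mathlib

section
/- Let φ : [1, ∞) → (0, ∞) be an increasing submultiplicative function with φ(t₀) < t₀ for some t₀ > 1. Then for every x > 1, φ(x) ≤ t₀ · x^{1 + log(φ(t₀)/t₀)/log t₀}, and in particular φ(x) ≤ C x^γ with γ = 1 + log(φ(t₀)/t₀)/log t₀ < 1 and C = t₀. -/
/-!
Iterating submultiplicativity gives `φ(t₀ⁿ) ≤ φ(t₀)ⁿ = (t₀ⁿ)^γ` with `γ = log_{t₀} φ(t₀)`.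
A general `x > 1` is bounded above by `t₀ⁿ` with `n = ⌈log_{t₀} x⌉`, and monotonicity transfers
the bound to `x`; rounding `log_{t₀} x` up to `n` costs at most the factor `t₀`.
-/

open Real

lemma apply_pow_le_pow_of_submultiplicative {φ : ℝ → ℝ} {t : ℝ}
    (hsub : ∀ t s, 1 ≤ t → 1 ≤ s → φ (t * s) ≤ φ t * φ s) (ht : 1 ≤ t) (hφt : 0 ≤ φ t) :
    ∀ n : ℕ, 1 ≤ n → φ (t ^ n) ≤ φ t ^ n := by
  refine Nat.le_induction (by simp) fun n _ ih => ?_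
  calc φ (t ^ (n + 1)) = φ (t ^ n * t) := by rw [pow_succ]
    _ ≤ φ (t ^ n) * φ t := hsub _ _ (one_le_pow₀ ht) ht
    _ ≤ φ t ^ n * φ t := mul_le_mul_of_nonneg_right ih hφt
    _ = φ t ^ (n + 1) := (pow_succ _ _).symm

lemma mul_natCeil_le_one_add_mul {γ L : ℝ} (hγ : γ ≤ 1) (hL : 0 ≤ L) :
    γ * ⌈L⌉₊ ≤ 1 + γ * L := by
  have hceil_ge : L ≤ ⌈L⌉₊ := Nat.le_ceil L
  have hceil_lt : (⌈L⌉₊ : ℝ) < L + 1 := Nat.ceil_lt_add_one hL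
  rcases le_or_gt 0 γ with hγ0 | hγ0 <;> nlinarith

lemma le_mul_rpow_logb_of_submultiplicative {φ : ℝ → ℝ} {b : ℝ}
    (hmono : MonotoneOn φ (Set.Ici 1))
    (hsub : ∀ t s, 1 ≤ t → 1 ≤ s → φ (t * s) ≤ φ t * φ s)
    (hb : 1 < b) (hφb_pos : 0 < φ b) (hφb_le : φ b ≤ b) {x : ℝ} (hx : 1 < x) :
    φ x ≤ b * x ^ logb b (φ b) := by
  set γ := logb b (φ b)
  set L := logb b x
  set n := ⌈L⌉₊
  have hb0 : 0 < b := by linarith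
  have hγ : γ ≤ 1 := by
    rw [← logb_self_eq_one hb]
    exact (logb_le_logb hb hφb_pos hb0).2 hφb_le
  have hL : 0 < L := logb_pos hb hx
  have hbL : b ^ L = x := rpow_logb hb0 hb.ne' (by linarith)
  have hn : 1 ≤ n := Nat.one_le_ceil_iff.2 hL
  have hx_le : x ≤ b ^ n := by
    rw [← hbL, ← rpow_natCast]
    exact rpow_le_rpow_of_exponent_le hb.le (Nat.le_ceil L)
  calc φ x ≤ φ (b ^ n) :=
        hmono (Set.mem_Ici.2 hx.le) (Set.mem_Ici.2 (one_le_pow₀ hb.le)) hx_le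
    _ ≤ φ b ^ n := apply_pow_le_pow_of_submultiplicative hsub hb.le hφb_pos.le n hn
    _ = b ^ (γ * n) := by rw [rpow_mul hb0.le, rpow_logb hb0 hb.ne' hφb_pos, rpow_natCast]
    _ ≤ b ^ (1 + γ * L) :=
      rpow_le_rpow_of_exponent_le hb.le (mul_natCeil_le_one_add_mul hγ hL.le)
    _ = b * x ^ γ := by rw [rpow_add hb0, rpow_one, mul_comm γ, rpow_mul hb0.le, hbL]

lemma one_add_log_div_div_log_eq_logb {a b : ℝ} (ha : 0 < a) (hb : 1 < b) :
    1 + log (a / b) / log b = logb b a := by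
  have hlog : log b ≠ 0 := (log_pos hb).ne'
  rw [log_div ha.ne' (by linarith), logb]
  field_simp
  ring

/-- Quantitative version of Lemma 2.5: if `φ(t₀) < t₀` for some `t₀ > 1`, then
`φ(x) ≤ t₀ · x ^ γ` for every `x > 1`, where `γ = 1 + log(φ(t₀)/t₀)/log t₀ < 1`. -/
theorem stmt_2 (φ : ℝ → ℝ) (t₀ : ℝ)
    (hpos : ∀ t, 1 ≤ t → 0 < φ t)
    (hmono : MonotoneOn φ (Set.Ici 1))
    (hsub : ∀ t s, 1 ≤ t → 1 ≤ s → φ (t * s) ≤ φ t * φ s)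
    (ht₀ : 1 < t₀) (hφt₀ : φ t₀ < t₀) :
    1 + Real.log (φ t₀ / t₀) / Real.log t₀ < 1 ∧
      ∀ x > (1 : ℝ), φ x ≤ t₀ * x ^ (1 + Real.log (φ t₀ / t₀) / Real.log t₀) := by
  have hφt₀_pos : 0 < φ t₀ := hpos t₀ ht₀.le
  rw [one_add_log_div_div_log_eq_logb hφt₀_pos ht₀]
  refine ⟨?_, fun x hx => ?_⟩
  · rw [← logb_self_eq_one ht₀]
    exact logb_lt_logb ht₀ hφt₀_pos hφt₀
  · exact le_mul_rpow_logb_of_submultiplicative hmono hsub ht₀ hφt₀_pos hφt₀.le hx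
end

section
/- Let w : (0, ∞) → [0, ∞) be locally integrable with W(t) = ∫₀ᵗ w(s) ds positive for t > 0, and suppose there is a constant A such that W(s)(1 + log(r/s)) ≤ A W(r) for all 0 < s ≤ r (equivalently, the dilation function satisfies a logarithmic decay at 0). Then w ∈ B*_∞: ∫₀ʳ (W(t)/t) dt ≤ C W(r) for all r > 0, for some constant C depending only on A. -/
/-!
Applying the hypothesis on `[s, √(sr)]` and on `[√(sr), r]`, where both ratios equal `√(r/s)`,
squares the logarithmic factor: `W(s)(1 + log(r/s))² ≤ 4A² W(r)`. Hence
`W(t)/t ≤ 4A² W(r) · (t (1 + log(r/t))²)⁻¹` on `(0, r]`, and the kernel on the right is the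
derivative of `(1 + log(r/t))⁻¹`, which increases from `0` at `t = 0⁺` to `1` at `t = r`.
-/

open MeasureTheory Set Filter Topology

lemma integrableOn_Ioc_deriv_of_nonneg_of_tendsto {g g' : ℝ → ℝ} {a b ga gb : ℝ} (hab : a < b)
    (hderiv : ∀ x ∈ Ioo a b, HasDerivAt g (g' x) x) (hpos : ∀ x ∈ Ioo a b, 0 ≤ g' x)
    (ha : Tendsto g (𝓝[>] a) (𝓝 ga)) (hb : Tendsto g (𝓝[<] b) (𝓝 gb)) :
    IntegrableOn g' (Ioc a b) := by
  refine intervalIntegral.integrableOn_deriv_of_nonneg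
    (g := Function.update (Function.update g a ga) b gb) ?_ ?_ hpos
  · rw [continuousOn_update_iff, continuousOn_update_iff, Icc_sdiff_right, Ico_sdiff_left]
    refine ⟨⟨fun z hz => (hderiv z hz).continuousAt.continuousWithinAt, ?_⟩, ?_⟩
    · exact fun _ => ha.mono_left (nhdsWithin_mono _ Ioo_subset_Ioi_self)
    · rintro -
      refine (hb.congr' ?_).mono_left (nhdsWithin_mono _ Ico_subset_Iio_self)
      filter_upwards [Ioo_mem_nhdsLT hab] with _ hz
      exact (Function.update_of_ne hz.1.ne' _ _).symm
  · refine fun x hx => (hderiv x hx).congr_of_eventuallyEq ?_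
    filter_upwards [Ioo_mem_nhds hx.1 hx.2] with _ hy
    rw [Function.update_of_ne hy.2.ne, Function.update_of_ne hy.1.ne']

noncomputable def logKernel (r t : ℝ) : ℝ := (t * (1 + Real.log (r / t)) ^ 2)⁻¹

lemma one_le_one_add_log_div {r t : ℝ} (ht : 0 < t) (htr : t ≤ r) : 1 ≤ 1 + Real.log (r / t) :=
  le_add_of_nonneg_right (Real.log_nonneg ((one_le_div ht).mpr htr))

lemma logKernel_nonneg {r t : ℝ} (ht : 0 < t) : 0 ≤ logKernel r t := by
  unfold logKernel; positivity

lemma hasDerivAt_inv_one_add_log_div {r t : ℝ} (hr : 0 < r) (ht : 0 < t) (htr : t ≤ r) :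
    HasDerivAt (fun t => (1 + Real.log (r / t))⁻¹) (logKernel r t) t := by
  have hlog : HasDerivAt (fun t => 1 + Real.log (r / t)) (-t⁻¹) t := by
    have hdiv : HasDerivAt (fun t => r / t) (-(r / t ^ 2)) t := by
      simpa [div_eq_mul_inv] using (hasDerivAt_inv ht.ne').const_mul r
    refine ((hdiv.log (div_pos hr ht).ne').const_add 1).congr_deriv ?_
    field_simp
  refine (hlog.inv (one_pos.trans_le (one_le_one_add_log_div ht htr)).ne').congr_deriv ?_
  rw [logKernel, neg_neg, ← one_div, div_div, one_div]

lemma tendsto_inv_one_add_log_div_nhdsGT_zero {r : ℝ} (hr : 0 < r) :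
    Tendsto (fun t => (1 + Real.log (r / t))⁻¹) (𝓝[>] 0) (𝓝 0) := by
  have hdiv : Tendsto (fun t => r / t) (𝓝[>] 0) atTop := by
    simpa [div_eq_mul_inv] using tendsto_inv_nhdsGT_zero.const_mul_atTop hr
  exact (tendsto_atTop_add_const_left _ 1 (Real.tendsto_log_atTop.comp hdiv)).inv_tendsto_atTop

lemma tendsto_inv_one_add_log_div_nhdsLT {r : ℝ} (hr : 0 < r) :
    Tendsto (fun t => (1 + Real.log (r / t))⁻¹) (𝓝[<] r) (𝓝 1) := by
  have := (hasDerivAt_inv_one_add_log_div hr hr le_rfl).continuousAt.tendsto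
  simpa using this.mono_left nhdsWithin_le_nhds

lemma integrableOn_logKernel {r : ℝ} (hr : 0 < r) : IntegrableOn (logKernel r) (Ioc 0 r) :=
  integrableOn_Ioc_deriv_of_nonneg_of_tendsto hr
    (fun _ ht => hasDerivAt_inv_one_add_log_div hr ht.1 ht.2.le)
    (fun _ ht => logKernel_nonneg ht.1)
    (tendsto_inv_one_add_log_div_nhdsGT_zero hr) (tendsto_inv_one_add_log_div_nhdsLT hr)

lemma integral_logKernel {r : ℝ} (hr : 0 < r) : ∫ t in Ioc 0 r, logKernel r t = 1 := by
  rw [← intervalIntegral.integral_of_le hr.le,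
    intervalIntegral.integral_eq_sub_of_hasDerivAt_of_tendsto hr
      (fun t ht => hasDerivAt_inv_one_add_log_div hr ht.1 ht.2.le)
      ((intervalIntegrable_iff_integrableOn_Ioc_of_le hr.le).mpr (integrableOn_logKernel hr))
      (tendsto_inv_one_add_log_div_nhdsGT_zero hr) (tendsto_inv_one_add_log_div_nhdsLT hr),
    sub_zero]

lemma mul_one_add_log_div_sq_le {W : ℝ → ℝ} {A : ℝ} (hA : 0 ≤ A)
    (hW : ∀ t > 0, 0 ≤ W t)
    (hlog : ∀ s r : ℝ, 0 < s → s ≤ r → W s * (1 + Real.log (r / s)) ≤ A * W r)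
    {s r : ℝ} (hs : 0 < s) (hsr : s ≤ r) :
    W s * (1 + Real.log (r / s)) ^ 2 ≤ 4 * A ^ 2 * W r := by
  set x := r / s
  have hx : 1 ≤ x := (one_le_div hs).mpr hsr
  have hr : r = s * x := by simp only [x]; field_simp
  set m := s * √x
  have hm : 0 < m := by positivity
  have hsm : m / s = √x := by simp only [m]; field_simp
  have hmr : r / m = √x := by simp only [m]; rw [hr, mul_div_mul_left _ _ hs.ne', Real.div_sqrt]
  have hlog_sqrt : Real.log √x = Real.log x / 2 := Real.log_sqrt (by positivity)
  have h1 := hlog s m hs (le_mul_of_one_le_right hs.le (Real.one_le_sqrt.mpr hx))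
  have h2 := hlog m r hm
    (hr ▸ mul_le_mul_of_nonneg_left (Real.sqrt_le_self_iff.mpr (.inr hx)) hs.le)
  rw [hsm, hlog_sqrt] at h1
  rw [hmr, hlog_sqrt] at h2
  have hL := Real.log_nonneg hx
  nlinarith [mul_le_mul_of_nonneg_right h1 (by linarith : (0:ℝ) ≤ 1 + Real.log x / 2),
    mul_le_mul_of_nonneg_left h2 hA, mul_nonneg (hW s hs) hL, hW m hm]

theorem stmt_7_general (W : ℝ → ℝ) (A : ℝ) (hA : 0 < A)
    (hWpos : ∀ t > (0 : ℝ), 0 < W t)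
    (hlog : ∀ s r : ℝ, 0 < s → s ≤ r → W s * (1 + Real.log (r / s)) ≤ A * W r) :
    ∃ C > (0 : ℝ), ∀ r > (0 : ℝ), (∫ t in Set.Ioc (0 : ℝ) r, W t / t) ≤ C * W r := by
  have hW_nonneg : ∀ t > 0, 0 ≤ W t := fun t ht => (hWpos t ht).le
  refine ⟨4 * A ^ 2, by positivity, fun r hr => ?_⟩
  have hbound : ∀ t ∈ Ioc 0 r, W t / t ≤ 4 * A ^ 2 * W r * logKernel r t := by
    intro t ⟨ht, htr⟩
    have hpos : 0 < t * (1 + Real.log (r / t)) ^ 2 :=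
      mul_pos ht (pow_pos (one_pos.trans_le (one_le_one_add_log_div ht htr)) 2)
    rw [logKernel, ← div_eq_mul_inv, le_div_iff₀ hpos]
    calc W t / t * (t * (1 + Real.log (r / t)) ^ 2) = W t * (1 + Real.log (r / t)) ^ 2 := by
          field_simp
      _ ≤ 4 * A ^ 2 * W r := mul_one_add_log_div_sq_le hA.le hW_nonneg hlog ht htr
  -- `integral_mono_of_nonneg` needs no integrability of `W t / t`: otherwise its integral is `0`.
  calc (∫ t in Ioc 0 r, W t / t) ≤ ∫ t in Ioc 0 r, 4 * A ^ 2 * W r * logKernel r t :=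
        integral_mono_of_nonneg
          ((ae_restrict_iff' measurableSet_Ioc).mpr
            (.of_forall fun t ht => div_nonneg (hW_nonneg t ht.1) ht.1.le))
          ((integrableOn_logKernel hr).const_mul _)
          ((ae_restrict_iff' measurableSet_Ioc).mpr (.of_forall hbound))
    _ = 4 * A ^ 2 * W r := by rw [integral_const_mul, integral_logKernel hr, mul_one]

/-- Conversely, the logarithmic decay `W(s)(1 + log(r/s)) ≤ A W(r)` for `0 < s ≤ r`
implies the `B*_∞` condition `∫₀ʳ W(t)/t dt ≤ C W(r)` for all `r > 0`. -/
theorem stmt_7 (w W : ℝ → ℝ) (A : ℝ) (hA : 0 < A)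
    (hw : ∀ t ∈ Set.Ioi (0 : ℝ), 0 ≤ w t)
    (hwint : ∀ r > (0 : ℝ), IntegrableOn w (Set.Ioc 0 r))
    (hW : ∀ t, W t = ∫ s in Set.Ioc (0 : ℝ) t, w s)
    (hWpos : ∀ t > (0 : ℝ), 0 < W t)
    (hlog : ∀ s r : ℝ, 0 < s → s ≤ r → W s * (1 + Real.log (r / s)) ≤ A * W r) :
    ∃ C > (0 : ℝ), ∀ r > (0 : ℝ), (∫ t in Set.Ioc (0 : ℝ) r, W t / t) ≤ C * W r :=
  stmt_7_general W A hA hWpos hlog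
end

section
/- Let I ⊂ ℝ be a bounded interval and S = ⋃_{k=1}^N (a_k, b_k) ⊂ I a finite disjoint union of open intervals with |S| > 0. Then for every t ∈ [1, |I|/|S|] there exists a finite collection of pairwise disjoint intervals I_1, …, I_M contained in I such that S ⊆ ⋃_n I_n and t·|S ∩ I_n| = |I_n| for every n. -/
open MeasureTheory Function Set

/-!
Grow an interval greedily from the left end of the leftmost component: its right end is always
`t` times the length of the components absorbed so far past its left end, and every component
starting at or before the current right end gets absorbed. If the whole family fits into one such
interval, one interval of length `t·|S|`, shifted left if necessary to stay inside `I`, does the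
job. Otherwise the greedy block is followed by a gap, and the remaining components have strictly
more room than they need to the right of it; both parts are handled recursively.
-/

namespace BalancedCover

variable {ι : Type*} (c d : ι → ℝ)

def totalLength (s : Finset ι) : ℝ := ∑ k ∈ s, (d k - c k)

def openUnion (s : Finset ι) : Set ℝ := ⋃ k ∈ s, Ioo (c k) (d k)

variable {c d} {t : ℝ}

lemma totalLength_nonneg {s : Finset ι} (hs : ∀ k ∈ s, c k ≤ d k) :
    0 ≤ totalLength c d s :=
  Finset.sum_nonneg fun k hk => sub_nonneg.2 (hs k hk)

lemma volume_openUnion {s : Finset ι}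
    (hdisj : (s : Set ι).PairwiseDisjoint fun k => Ioo (c k) (d k))
    (hs : ∀ k ∈ s, c k ≤ d k) :
    volume (openUnion c d s) = ENNReal.ofReal (totalLength c d s) := by
  rw [openUnion, measure_biUnion_finset hdisj fun k _ => measurableSet_Ioo, totalLength,
    ENNReal.ofReal_sum_of_nonneg fun k hk => sub_nonneg.2 (hs k hk)]
  exact Finset.sum_congr rfl fun k _ => Real.volume_Ioo

lemma openUnion_union_sdiff [DecidableEq ι] {s₁ s : Finset ι} (h : s₁ ⊆ s) :
    openUnion c d s = openUnion c d s₁ ∪ openUnion c d (s \ s₁) := by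
  rw [openUnion, openUnion, openUnion, ← Finset.set_biUnion_union, Finset.union_sdiff_of_subset h]

lemma totalLength_union_sdiff [DecidableEq ι] {s₁ s : Finset ι} (h : s₁ ⊆ s) :
    totalLength c d s = totalLength c d s₁ + totalLength c d (s \ s₁) := by
  rw [totalLength, totalLength, totalLength, ← Finset.sum_sdiff h, add_comm]

lemma exists_greedy_block [DecidableEq ι] (ht : 1 ≤ t) (s : Finset ι)
    (hs : ∀ k ∈ s, c k ≤ d k) (x₀ : ℝ) :
    ∃ s₁ ⊆ s, (∀ k ∈ s₁, d k ≤ x₀ + t * totalLength c d s₁) ∧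
      ∀ k ∈ s \ s₁, x₀ + t * totalLength c d s₁ < c k := by
  induction s using Finset.strongInduction generalizing x₀ with
  | H s ih =>
  by_cases hgap : ∀ k ∈ s, x₀ < c k
  · exact ⟨∅, Finset.empty_subset _, by simp, by simpa [totalLength] using hgap⟩
  push Not at hgap
  obtain ⟨q, hq, hqx⟩ := hgap
  have hs' : ∀ k ∈ s.erase q, c k ≤ d k := fun k hk => hs k (Finset.mem_of_mem_erase hk)
  obtain ⟨s₁, hs₁, hend, hstart⟩ :=
    ih (s.erase q) (Finset.erase_ssubset hq) hs' (x₀ + t * (d q - c q))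
  have hq₁ : q ∉ s₁ := fun h => Finset.notMem_erase q s (hs₁ h)
  have hlen : totalLength c d (insert q s₁) = (d q - c q) + totalLength c d s₁ :=
    Finset.sum_insert hq₁
  refine ⟨insert q s₁, Finset.insert_subset hq (hs₁.trans (Finset.erase_subset _ _)),
    ?_, ?_⟩
  · intro k hk
    rw [hlen]
    rcases Finset.mem_insert.1 hk with rfl | hk
    · have hq_le : d k - c k ≤ t * (d k - c k) :=
        le_mul_of_one_le_left (sub_nonneg.2 (hs k hq)) ht
      have hrest : 0 ≤ t * totalLength c d s₁ :=
        mul_nonneg (by linarith) (totalLength_nonneg fun k hk => hs' k (hs₁ hk))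
      linarith
    · linarith [hend k hk]
  · intro k hk
    obtain ⟨hks, hkq₁⟩ := Finset.mem_sdiff.1 hk
    rw [Finset.mem_insert, not_or] at hkq₁
    rw [hlen]
    linarith [hstart k (Finset.mem_sdiff.2 ⟨Finset.mem_erase.2 ⟨hkq₁.1, hks⟩, hkq₁.2⟩)]

structure IsBalancedCover (t : ℝ) (I S : Set ℝ) (J : Finset (ℝ × ℝ)) : Prop where
  le : ∀ q ∈ J, q.1 ≤ q.2
  subset : ∀ q ∈ J, Icc q.1 q.2 ⊆ I
  pairwiseDisjoint : (J : Set (ℝ × ℝ)).PairwiseDisjoint fun q => Icc q.1 q.2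
  cover : S ⊆ ⋃ q ∈ J, Icc q.1 q.2
  balanced : ∀ q ∈ J, ENNReal.ofReal t * volume (S ∩ Icc q.1 q.2) = volume (Icc q.1 q.2)

namespace IsBalancedCover

variable {I S : Set ℝ}

lemma mono {J : Finset (ℝ × ℝ)} (h : IsBalancedCover t I S J) {I' : Set ℝ} (hI : I ⊆ I') :
    IsBalancedCover t I' S J :=
  ⟨h.le, fun q hq => (h.subset q hq).trans hI, h.pairwiseDisjoint, h.cover, h.balanced⟩

lemma empty : IsBalancedCover t I ∅ ∅ :=
  ⟨by simp, by simp, by simp, empty_subset _, by simp⟩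

lemma singleton {e g : ℝ} (heg : e ≤ g) (hI : Icc e g ⊆ I) (hS : S ⊆ Icc e g)
    (hvol : ENNReal.ofReal t * volume S = volume (Icc e g)) :
    IsBalancedCover t I S {(e, g)} where
  le := by simpa using heg
  subset := by simpa using hI
  pairwiseDisjoint := by simp
  cover := by simpa using hS
  balanced := by simpa [inter_eq_left.2 hS] using hvol

lemma union {I₁ I₂ S₁ S₂ : Set ℝ} {J₁ J₂ : Finset (ℝ × ℝ)}
    (h₁ : IsBalancedCover t I₁ S₁ J₁) (h₂ : IsBalancedCover t I₂ S₂ J₂)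
    (hI : Disjoint I₁ I₂) (h₁₂ : Disjoint I₁ S₂) (h₂₁ : Disjoint I₂ S₁) :
    IsBalancedCover t (I₁ ∪ I₂) (S₁ ∪ S₂) (J₁ ∪ J₂) where
  le q hq := (Finset.mem_union.1 hq).elim (h₁.le q) (h₂.le q)
  subset q hq := (Finset.mem_union.1 hq).elim
    (fun hq => (h₁.subset q hq).trans subset_union_left)
    (fun hq => (h₂.subset q hq).trans subset_union_right)
  pairwiseDisjoint := by
    rw [Finset.coe_union, pairwiseDisjoint_union]
    exact ⟨h₁.pairwiseDisjoint, h₂.pairwiseDisjoint, fun q hq r hr _ =>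
      hI.mono (h₁.subset q hq) (h₂.subset r hr)⟩
  cover := by
    rw [Finset.set_biUnion_union]
    exact union_subset_union h₁.cover h₂.cover
  balanced q hq := by
    rcases Finset.mem_union.1 hq with hq | hq
    · rw [union_inter_distrib_right, ((h₁₂.mono_left (h₁.subset q hq)).symm).inter_eq,
        union_empty]
      exact h₁.balanced q hq
    · rw [union_inter_distrib_right, ((h₂₁.mono_left (h₂.subset q hq)).symm).inter_eq,
        empty_union]
      exact h₂.balanced q hq

lemma union_Icc {a x y b : ℝ} {S₁ S₂ : Set ℝ} {J₁ J₂ : Finset (ℝ × ℝ)}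
    (h₁ : IsBalancedCover t (Icc a x) S₁ J₁) (h₂ : IsBalancedCover t (Icc y b) S₂ J₂)
    (hax : a ≤ x) (hxy : x < y) (hyb : y ≤ b) (hS₁ : S₁ ⊆ Iic x) (hS₂ : S₂ ⊆ Ioi x) :
    IsBalancedCover t (Icc a b) (S₁ ∪ S₂) (J₁ ∪ J₂) := by
  have hIic : Disjoint (Icc y b) (Iic x) :=
    disjoint_left.2 fun z hz hz' => (hxy.trans_le hz.1).not_ge hz'
  refine (h₁.union h₂ ?_ ?_ (hIic.mono_right hS₁)).mono ?_
  · exact hIic.symm.mono_left Icc_subset_Iic_self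
  · exact (disjoint_left.2 fun z hz hz' => (mem_Ioi.1 hz').not_ge hz.2).mono_right hS₂
  · exact union_subset (Icc_subset_Icc_right (hxy.le.trans hyb))
      (Icc_subset_Icc_left (hax.trans hxy.le))

lemma exists_fin {J : Finset (ℝ × ℝ)} (h : IsBalancedCover t I S J) :
    ∃ (M : ℕ) (e g : Fin M → ℝ),
      (∀ n, e n ≤ g n) ∧
      (∀ n, Icc (e n) (g n) ⊆ I) ∧
      Pairwise (onFun Disjoint fun n => Icc (e n) (g n)) ∧
      S ⊆ ⋃ n, Icc (e n) (g n) ∧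
      ∀ n, ENNReal.ofReal t * volume (S ∩ Icc (e n) (g n)) = volume (Icc (e n) (g n)) := by
  let f := J.equivFin.symm
  refine ⟨J.card, fun n => (f n).1.1, fun n => (f n).1.2, fun n => h.le _ (f n).2,
    fun n => h.subset _ (f n).2, fun n m hnm => ?_, ?_, fun n => h.balanced _ (f n).2⟩
  · exact h.pairwiseDisjoint (f n).2 (f m).2 fun hq => hnm (f.injective (Subtype.ext hq))
  · refine h.cover.trans (iUnion₂_subset fun q hq => ?_)
    exact subset_iUnion_of_subset (f.symm ⟨q, hq⟩) (by simp)

end IsBalancedCover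

lemma exists_isBalancedCover_of_block {s : Finset ι}
    (hdisj : (s : Set ι).PairwiseDisjoint fun k => Ioo (c k) (d k)) {a b lo : ℝ} (ht : 0 ≤ t)
    (hs : ∀ k ∈ s, lo ≤ c k ∧ c k ≤ d k ∧ d k ≤ lo + t * totalLength c d s ∧ d k ≤ b)
    (ha : a ≤ lo) (hlen : t * totalLength c d s ≤ b - a) :
    ∃ J, IsBalancedCover t (Icc a b) (openUnion c d s) J := by
  set ℓ := t * totalLength c d s
  have hℓ : 0 ≤ ℓ := mul_nonneg ht (totalLength_nonneg fun k hk => (hs k hk).2.1)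
  set e := min lo (b - ℓ)
  have hend : e + ℓ = min (lo + ℓ) b := by rw [← min_add_add_right, sub_add_cancel]
  refine ⟨_, IsBalancedCover.singleton (e := e) (g := e + ℓ) (by linarith) ?_ ?_ ?_⟩
  · exact Icc_subset_Icc (le_min ha (by linarith)) (hend ▸ min_le_right _ _)
  · refine iUnion₂_subset fun k hk => Ioo_subset_Icc_self.trans (Icc_subset_Icc ?_ ?_)
    · exact (min_le_left _ _).trans (hs k hk).1
    · exact hend ▸ le_min (hs k hk).2.2.1 (hs k hk).2.2.2
  · rw [volume_openUnion hdisj fun k hk => (hs k hk).2.1, ← ENNReal.ofReal_mul ht,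
      Real.volume_Icc, add_sub_cancel_left]

theorem exists_isBalancedCover [DecidableEq ι] (ht : 1 ≤ t) (s : Finset ι)
    (hdisj : (s : Set ι).PairwiseDisjoint fun k => Ioo (c k) (d k)) {a b : ℝ}
    (hs : ∀ k ∈ s, a ≤ c k ∧ c k ≤ d k ∧ d k ≤ b) (hlen : t * totalLength c d s ≤ b - a) :
    ∃ J, IsBalancedCover t (Icc a b) (openUnion c d s) J := by
  induction s using Finset.strongInduction generalizing a b with
  | H s ih =>
  obtain rfl | hne := s.eq_empty_or_nonempty
  · exact ⟨∅, by simpa [openUnion] using IsBalancedCover.empty⟩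
  have hle : ∀ k ∈ s, c k ≤ d k := fun k hk => (hs k hk).2.1
  have ht₀ : 0 ≤ t := zero_le_one.trans ht
  obtain ⟨p, hp, hpmin⟩ := s.exists_min_image c hne
  by_cases hblock : ∀ k ∈ s, d k ≤ c p + t * totalLength c d s
  · exact exists_isBalancedCover_of_block hdisj ht₀
      (fun k hk => ⟨hpmin k hk, hle k hk, hblock k hk, (hs k hk).2.2⟩) (hs p hp).1 hlen
  push Not at hblock
  obtain ⟨r, hr, hr_long⟩ := hblock
  obtain ⟨s₁, hs₁, hend, hstart⟩ := exists_greedy_block ht s hle (c p)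
  set s₂ := s \ s₁
  set X := c p + t * totalLength c d s₁
  have hsplit : t * totalLength c d s = t * totalLength c d s₁ + t * totalLength c d s₂ := by
    rw [totalLength_union_sdiff hs₁, mul_add]
  have hL₁ : 0 ≤ t * totalLength c d s₁ :=
    mul_nonneg ht₀ (totalLength_nonneg fun k hk => hle k (hs₁ hk))
  have hL₂ : 0 ≤ t * totalLength c d s₂ :=
    mul_nonneg ht₀ (totalLength_nonneg fun k hk => hle k (Finset.sdiff_subset hk))
  have hr₂ : r ∈ s₂ := Finset.mem_sdiff.2 ⟨hr, fun h => by linarith [hend r h]⟩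
  have hp₁ : p ∈ s₁ := by
    by_contra h
    linarith [hstart p (Finset.mem_sdiff.2 ⟨hp, h⟩)]
  obtain ⟨r₀, hr₀, hr₀min⟩ := s₂.exists_min_image c ⟨r, hr₂⟩
  set a₂ := min (c r₀) (b - t * totalLength c d s₂)
  have hXa₂ : X < a₂ := lt_min (hstart r₀ hr₀) (by linarith [(hs r hr).2.2])
  have ha₂b : a₂ ≤ b - t * totalLength c d s₂ := min_le_right _ _
  obtain ⟨J₁, hJ₁⟩ :=
    ih s₁ ((Finset.ssubset_iff_of_subset hs₁).2 ⟨r, hr, (Finset.mem_sdiff.1 hr₂).2⟩)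
    (hdisj.subset hs₁) (a := c p) (b := X)
    (fun k hk => ⟨hpmin k (hs₁ hk), hle k (hs₁ hk), hend k hk⟩) (by simp [X])
  obtain ⟨J₂, hJ₂⟩ := ih s₂ (Finset.sdiff_ssubset hs₁ ⟨p, hp₁⟩)
    (hdisj.subset Finset.sdiff_subset) (a := a₂) (b := b)
    (fun k hk => ⟨(min_le_left _ _).trans (hr₀min k hk), hle k (Finset.sdiff_subset hk),
      (hs k (Finset.sdiff_subset hk)).2.2⟩) (by linarith)
  rw [openUnion_union_sdiff hs₁]
  refine ⟨J₁ ∪ J₂, (hJ₁.union_Icc hJ₂ (by linarith) hXa₂ (by linarith)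
    (iUnion₂_subset fun k hk z hz => hz.2.le.trans (hend k hk))
    (iUnion₂_subset fun k hk z hz => (hstart k hk).trans hz.1)).mono
      (Icc_subset_Icc_left (hs p hp).1)⟩

end BalancedCover

open BalancedCover in
theorem stmt_9_general (a b : ℝ) (N : ℕ) (c d : Fin N → ℝ)
    (hcd : ∀ k, c k < d k)
    (hsub : ∀ k, Set.Ioo (c k) (d k) ⊆ Set.Icc a b)
    (hdisj : Pairwise (onFun Disjoint fun k => Set.Ioo (c k) (d k)))
    (S : Set ℝ) (hS : S = ⋃ k, Set.Ioo (c k) (d k))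
    (hSpos : 0 < (volume S).toReal)
    (t : ℝ) (ht1 : 1 ≤ t) (ht2 : t ≤ (b - a) / (volume S).toReal) :
    ∃ (M : ℕ) (e g : Fin M → ℝ),
      (∀ n, e n ≤ g n) ∧
      (∀ n, Set.Icc (e n) (g n) ⊆ Set.Icc a b) ∧
      Pairwise (onFun Disjoint fun n => Set.Icc (e n) (g n)) ∧
      S ⊆ ⋃ n, Set.Icc (e n) (g n) ∧
      ∀ n, ENNReal.ofReal t * volume (S ∩ Set.Icc (e n) (g n)) =
        volume (Set.Icc (e n) (g n)) := by
  have hbounds : ∀ k ∈ Finset.univ, a ≤ c k ∧ c k ≤ d k ∧ d k ≤ b := fun k _ =>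
    have hIcc := (Icc_subset_Icc_iff (hcd k).le).1
      (closure_Ioo (hcd k).ne ▸ closure_minimal (hsub k) isClosed_Icc)
    ⟨hIcc.1, (hcd k).le, hIcc.2⟩
  have hdisj' := hdisj.set_pairwise (Finset.univ : Finset (Fin N))
  have hSunion : S = openUnion c d Finset.univ := by simp [hS, openUnion]
  have hvol : (volume S).toReal = totalLength c d Finset.univ := by
    rw [hSunion, volume_openUnion hdisj' fun k hk => (hbounds k hk).2.1,
      ENNReal.toReal_ofReal (totalLength_nonneg fun k hk => (hbounds k hk).2.1)]
  obtain ⟨J, hJ⟩ := exists_isBalancedCover ht1 Finset.univ hdisj' hbounds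
    (by rw [← hvol]; exact (le_div_iff₀ hSpos).1 ht2)
  exact hSunion ▸ hJ.exists_fin

/-- Covering lemma (Lemma 3.1): if `S ⊆ I` is a finite disjoint union of open
intervals with `|S| > 0` and `1 ≤ t ≤ |I|/|S|`, then there are finitely many
pairwise disjoint subintervals of `I` covering `S` with `t·|S ∩ Iₙ| = |Iₙ|`. -/
theorem stmt_9 (a b : ℝ) (hab : a < b) (N : ℕ) (c d : Fin N → ℝ)
    (hcd : ∀ k, c k < d k)
    (hsub : ∀ k, Set.Ioo (c k) (d k) ⊆ Set.Icc a b)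
    (hdisj : Pairwise (onFun Disjoint fun k => Set.Ioo (c k) (d k)))
    (S : Set ℝ) (hS : S = ⋃ k, Set.Ioo (c k) (d k))
    (hSpos : 0 < (volume S).toReal)
    (t : ℝ) (ht1 : 1 ≤ t) (ht2 : t ≤ (b - a) / (volume S).toReal) :
    ∃ (M : ℕ) (e g : Fin M → ℝ),
      (∀ n, e n ≤ g n) ∧
      (∀ n, Set.Icc (e n) (g n) ⊆ Set.Icc a b) ∧
      Pairwise (onFun Disjoint fun n => Set.Icc (e n) (g n)) ∧
      S ⊆ ⋃ n, Set.Icc (e n) (g n) ∧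
      ∀ n, ENNReal.ofReal t * volume (S ∩ Set.Icc (e n) (g n)) =
        volume (Set.Icc (e n) (g n)) :=
  stmt_9_general a b N c d hcd hsub hdisj S hS hSpos t ht1 ht2
end

section
/- Let u be a positive locally integrable weight on ℝ and w a nonnegative locally integrable weight on (0, ∞) with W(t) = ∫₀ᵗ w. Define, for t ≥ 1, W̄_u(t) as the supremum of W(u(⋃_j I_j)) / W(u(⋃_j S_j)) over all finite families of pairwise disjoint intervals I_j and finite unions of intervals S_j ⊆ I_j with |I_j| = t|S_j| for every j. Then W̄_u is submultiplicative: W̄_u(λμ) ≤ W̄_u(λ)·W̄_u(μ) for all λ, μ ≥ 1. -/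
open MeasureTheory Function
open scoped ENNReal

/-- A set that is a finite union of (half-open) intervals. -/
def IsFinUnionOfIntervals (S : Set ℝ) : Prop :=
  ∃ (n : ℕ) (a b : Fin n → ℝ), S = ⋃ i, Set.Ioc (a i) (b i)

/-- `uMeas u E = u(E) = ∫_E u`. -/
noncomputable def uMeas (u : ℝ → ℝ) (E : Set ℝ) : ℝ := ∫ x in E, u x

/-- The set of ratios `W(u(⋃ Iⱼ))/W(u(⋃ Sⱼ))` over admissible configurations:
finitely many pairwise disjoint intervals `Iⱼ`, with `Sⱼ ⊆ Iⱼ` a finite union of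
intervals and `|Iⱼ| = t·|Sⱼ|` for every `j`. -/
def configRatios (u W : ℝ → ℝ) (t : ℝ) : Set ℝ≥0∞ :=
  {q | ∃ (J : ℕ) (I S : Fin J → Set ℝ),
    (∀ j, ∃ aj bj : ℝ, aj ≤ bj ∧ I j = Set.Ioc aj bj) ∧
    Pairwise (onFun Disjoint I) ∧
    (∀ j, S j ⊆ I j) ∧
    (∀ j, IsFinUnionOfIntervals (S j)) ∧
    (∀ j, (volume (I j)).toReal = t * (volume (S j)).toReal) ∧
    q = ENNReal.ofReal (W (uMeas u (⋃ j, I j)) / W (uMeas u (⋃ j, S j)))}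

/-- The function `W̄_u`. -/
noncomputable def WbarU (u W : ℝ → ℝ) (t : ℝ) : ℝ≥0∞ := sSup (configRatios u W t)

open Set

/-!
Given an admissible configuration `(Iⱼ, Sⱼ)` for `λμ`, the covering lemma splits `Sⱼ` inside
`Iⱼ` into disjoint intervals `K` with `|K| = μ |Sⱼ ∩ K|`. Putting `Tⱼ = ⋃ K` gives
`|Iⱼ| = λ |Tⱼ|`, so `(Iⱼ, Tⱼ)` is admissible for `λ`, the pieces `(K, Sⱼ ∩ K)` are admissible
for `μ`, and the ratio `W(u(⋃ I)) / W(u(⋃ S))` factors through `W(u(⋃ T))`.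

The covering lemma, for `S ⊆ (a, b]` with `t |S| ≤ b - a`, is proved greedily from the left.
Let `s` be the left end of the leftmost component of `S`. If `b - t |S| ≤ s`, the single interval
`(b - t |S|, b]` works. Otherwise `x ↦ x - t |S ∩ (s, x]|` is continuous, at most `s` at the
right end of that component and above `s` at `b`, so the intermediate value theorem gives `β`
with `β - s = t |S ∩ (s, β]|`; what remains of `S` lies in `(β, b]`, has fewer components, and
still satisfies the length condition there.
-/

lemma IsFinUnionOfIntervals.measurableSet {S : Set ℝ} (h : IsFinUnionOfIntervals S) :
    MeasurableSet S := by
  obtain ⟨n, a, b, rfl⟩ := h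
  exact MeasurableSet.iUnion fun _ => measurableSet_Ioc

lemma IsFinUnionOfIntervals.inter_Ioc {S : Set ℝ} (h : IsFinUnionOfIntervals S) (x y : ℝ) :
    IsFinUnionOfIntervals (S ∩ Ioc x y) := by
  obtain ⟨n, a, b, rfl⟩ := h
  refine ⟨n, fun i => max (a i) x, fun i => min (b i) y, ?_⟩
  rw [iUnion_inter]
  exact iUnion_congr fun _ => Ioc_inter_Ioc

lemma isFinUnionOfIntervals_iff_exists_finset {S : Set ℝ} :
    IsFinUnionOfIntervals S ↔ ∃ F : Finset (ℝ × ℝ), S = ⋃ p ∈ F, Ioc p.1 p.2 := by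
  constructor
  · rintro ⟨n, a, b, rfl⟩
    refine ⟨Finset.univ.image fun i => (a i, b i), ?_⟩
    simp
  · rintro ⟨F, rfl⟩
    refine ⟨F.card, fun i => (F.equivFin.symm i).1.1, fun i => (F.equivFin.symm i).1.2, ?_⟩
    rw [F.equivFin.symm.surjective.iUnion_comp (fun p => Ioc p.1.1 p.1.2)]
    simp [Set.iUnion_subtype]

lemma lipschitzWith_measureReal_inter_Ioc (S : Set ℝ) (a : ℝ) :
    LipschitzWith 1 fun x => volume.real (S ∩ Ioc a x) := by
  refine LipschitzWith.of_le_add fun x y => ?_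
  have hsub : S ∩ Ioc a x ⊆ S ∩ Ioc a y ∪ Ioc y x := by
    rintro z ⟨hzS, haz, hzx⟩
    by_cases hzy : z ≤ y
    · exact Or.inl ⟨hzS, haz, hzy⟩
    · exact Or.inr ⟨not_le.1 hzy, hzx⟩
  calc volume.real (S ∩ Ioc a x) ≤ volume.real (S ∩ Ioc a y ∪ Ioc y x) :=
        measureReal_mono hsub (measure_union_ne_top
          (measure_ne_top_of_subset inter_subset_right measure_Ioc_lt_top.ne) measure_Ioc_lt_top.ne)
    _ ≤ volume.real (S ∩ Ioc a y) + volume.real (Ioc y x) := measureReal_union_le _ _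
    _ ≤ _ := by
      rw [Real.volume_real_Ioc, Real.dist_eq]
      gcongr
      exact max_le (le_abs_self _) (abs_nonneg _)

structure IsRatioCover (t : ℝ) (S I : Set ℝ) (G : Finset (ℝ × ℝ)) : Prop where
  Ioc_subset : ∀ p ∈ G, Ioc p.1 p.2 ⊆ I
  pairwiseDisjoint : (G : Set (ℝ × ℝ)).PairwiseDisjoint fun p => Ioc p.1 p.2
  subset_biUnion : S ⊆ ⋃ p ∈ G, Ioc p.1 p.2
  length_eq : ∀ p ∈ G, p.2 - p.1 = t * volume.real (S ∩ Ioc p.1 p.2)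

namespace IsRatioCover

variable {t : ℝ} {S I : Set ℝ} {G : Finset (ℝ × ℝ)}

lemma empty (t : ℝ) (I : Set ℝ) : IsRatioCover t ∅ I ∅ :=
  ⟨by simp, by simp, empty_subset _, by simp⟩

lemma singleton {c b : ℝ} (hS : S ⊆ Ioc c b) (hI : Ioc c b ⊆ I)
    (hlen : b - c = t * volume.real S) : IsRatioCover t S I {(c, b)} where
  Ioc_subset := by simpa using hI
  pairwiseDisjoint := by simp
  subset_biUnion := by simpa using hS
  length_eq := by simpa [inter_eq_left.2 hS] using hlen

lemma insert {s β b : ℝ} (hG : IsRatioCover t (S ∩ Ioi β) (Ioc β b) G) (hS : S ⊆ Ioc s b)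
    (hI : Ioc s b ⊆ I) (hsβ : s ≤ β) (hβb : β ≤ b)
    (hlen : β - s = t * volume.real (S ∩ Ioc s β)) :
    IsRatioCover t S I (insert (s, β) G) where
  Ioc_subset := by
    simp only [Finset.mem_insert, forall_eq_or_imp]
    exact ⟨(Ioc_subset_Ioc_right hβb).trans hI, fun p hp =>
      (hG.Ioc_subset p hp).trans ((Ioc_subset_Ioc_left hsβ).trans hI)⟩
  pairwiseDisjoint := by
    rw [Finset.coe_insert]
    exact hG.pairwiseDisjoint.insert fun p hp _ =>
      (Ioc_disjoint_Ioc_of_le le_rfl).mono_right (hG.Ioc_subset p hp)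
  subset_biUnion x hx := by
    rw [Finset.set_biUnion_insert]
    rcases le_or_gt x β with hxβ | hβx
    · exact Or.inl ⟨(hS hx).1, hxβ⟩
    · exact Or.inr (hG.subset_biUnion ⟨hx, hβx⟩)
  length_eq := by
    simp only [Finset.mem_insert, forall_eq_or_imp]
    refine ⟨hlen, fun p hp => ?_⟩
    rw [hG.length_eq p hp, inter_right_comm, inter_assoc,
      inter_eq_left.2 ((hG.Ioc_subset p hp).trans Ioc_subset_Ioi_self)]

lemma fst_le_snd (hG : IsRatioCover t S I G) (ht : 0 ≤ t) {p : ℝ × ℝ} (hp : p ∈ G) :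
    p.1 ≤ p.2 :=
  sub_nonneg.1 (hG.length_eq p hp ▸ mul_nonneg ht measureReal_nonneg)

lemma measureReal_biUnion (hG : IsRatioCover t S I G) (ht : 0 ≤ t) (hS : MeasurableSet S) :
    volume.real (⋃ p ∈ G, Ioc p.1 p.2) = t * volume.real S := by
  calc volume.real (⋃ p ∈ G, Ioc p.1 p.2) = ∑ p ∈ G, (p.2 - p.1) := by
        rw [measureReal_biUnion_finset hG.pairwiseDisjoint (fun _ _ => measurableSet_Ioc)
          (fun _ _ => measure_Ioc_lt_top.ne)]
        exact Finset.sum_congr rfl fun p hp => Real.volume_real_Ioc_of_le (hG.fst_le_snd ht hp)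
    _ = t * ∑ p ∈ G, volume.real (S ∩ Ioc p.1 p.2) := by
        rw [Finset.mul_sum]; exact Finset.sum_congr rfl hG.length_eq
    _ = t * volume.real S := by
        rw [← measureReal_biUnion_finset (hG.pairwiseDisjoint.mono fun _ => inter_subset_right)
          (fun _ _ => hS.inter measurableSet_Ioc) (fun _ _ => measure_ne_top_of_subset
            inter_subset_right measure_Ioc_lt_top.ne), ← inter_iUnion₂,
          inter_eq_left.2 hG.subset_biUnion]

end IsRatioCover

lemma exists_ratio_cut {t s B b : ℝ} {S : Set ℝ} (ht : 1 ≤ t) (hS : MeasurableSet S)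
    (hSsub : S ⊆ Ioc s b) (hsB : s < B) (hB : Ioc s B ⊆ S) (hb : s < b - t * volume.real S) :
    ∃ β, B ≤ β ∧ β ≤ b ∧ β - s = t * volume.real (S ∩ Ioc s β) ∧
      t * volume.real (S ∩ Ioi β) ≤ b - β := by
  have hfin : ∀ T ⊆ S, volume T ≠ ∞ := fun T hT =>
    measure_ne_top_of_subset (hT.trans hSsub) measure_Ioc_lt_top.ne
  have hBb : B ≤ b := ((Ioc_subset_Ioc_iff hsB).1 (hB.trans hSsub)).1
  have hVB : B - s ≤ volume.real (S ∩ Ioc s B) := by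
    rw [← Real.volume_real_Ioc_of_le hsB.le]
    exact measureReal_mono (subset_inter hB Subset.rfl) (hfin _ inter_subset_left)
  have hVb : volume.real (S ∩ Ioc s b) = volume.real S := by rw [inter_eq_left.2 hSsub]
  have hcont : Continuous fun x => x - t * volume.real (S ∩ Ioc s x) :=
    continuous_id.sub (continuous_const.mul (lipschitzWith_measureReal_inter_Ioc S s).continuous)
  obtain ⟨β, ⟨hBβ, hβb⟩, hβ⟩ := intermediate_value_Icc hBb hcont.continuousOn
    (show s ∈ Icc _ _ from ⟨by nlinarith, by rw [hVb]; exact hb.le⟩)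
  have hsplit : volume.real S = volume.real (S ∩ Ioc s β) + volume.real (S ∩ Ioi β) := by
    rw [← measureReal_union ((Ioc_disjoint_Ioi le_rfl).mono inter_subset_right inter_subset_right)
      (hS.inter measurableSet_Ioi) (hfin _ inter_subset_left) (hfin _ inter_subset_left),
      ← inter_union_distrib_left, Ioc_union_Ioi_eq_Ioi (hsB.le.trans hBβ),
      inter_eq_left.2 (hSsub.trans Ioc_subset_Ioi_self)]
  refine ⟨β, hBβ, hβb, by linarith, by nlinarith⟩

theorem exists_isRatioCover_biUnion {t : ℝ} (ht : 1 ≤ t) (F : Finset (ℝ × ℝ)) {a b : ℝ}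
    (hsub : (⋃ p ∈ F, Ioc p.1 p.2) ⊆ Ioc a b)
    (hvol : t * volume.real (⋃ p ∈ F, Ioc p.1 p.2) ≤ b - a) :
    ∃ G, IsRatioCover t (⋃ p ∈ F, Ioc p.1 p.2) (Ioc a b) G := by
  induction hn : F.card using Nat.strong_induction_on generalizing F a b with
  | _ n ih =>
  set S := ⋃ p ∈ F, Ioc p.1 p.2 with hS
  rcases S.eq_empty_or_nonempty with hS₀ | ⟨x, hx⟩
  · exact ⟨∅, hS₀ ▸ IsRatioCover.empty t _⟩
  have hne : (F.filter fun p => p.1 < p.2).Nonempty := by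
    obtain ⟨p, hp, hxp⟩ := mem_iUnion₂.1 hx
    exact ⟨p, Finset.mem_filter.2 ⟨hp, hxp.1.trans_le hxp.2⟩⟩
  obtain ⟨p₀, hp₀, hmin⟩ := (F.filter fun p => p.1 < p.2).exists_min_image Prod.fst hne
  obtain ⟨hp₀F, hp₀lt⟩ := Finset.mem_filter.1 hp₀
  have hB : Ioc p₀.1 p₀.2 ⊆ S := subset_biUnion_of_mem (u := fun p => Ioc p.1 p.2) hp₀F
  have hap₀ : a ≤ p₀.1 := ((Ioc_subset_Ioc_iff hp₀lt).1 (hB.trans hsub)).2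
  have hSsub : S ⊆ Ioc p₀.1 b := by
    refine fun y hy => ⟨?_, (hsub hy).2⟩
    obtain ⟨p, hp, hyp⟩ := mem_iUnion₂.1 hy
    exact (hmin p (Finset.mem_filter.2 ⟨hp, hyp.1.trans_le hyp.2⟩)).trans_lt hyp.1
  have hSmeas : MeasurableSet S := Finset.measurableSet_biUnion _ fun _ _ => measurableSet_Ioc
  by_cases hcut : b - t * volume.real S ≤ p₀.1
  · exact ⟨_, IsRatioCover.singleton (hSsub.trans (Ioc_subset_Ioc_left hcut))
      (Ioc_subset_Ioc_left (by linarith)) (by ring)⟩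
  obtain ⟨β, hBβ, hβb, hlen, hslack⟩ :=
    exists_ratio_cut ht hSmeas hSsub hp₀lt hB (not_le.1 hcut)
  set F' := (F.erase p₀).image fun p => (max p.1 β, p.2)
  have hF' : ⋃ p ∈ F', Ioc p.1 p.2 = S ∩ Ioi β := by
    have hS' : S = Ioc p₀.1 p₀.2 ∪ ⋃ p ∈ F.erase p₀, Ioc p.1 p.2 := by
      simpa only [Finset.insert_erase hp₀F] using
        Finset.set_biUnion_insert p₀ (F.erase p₀) fun p => Ioc p.1 p.2
    rw [Finset.set_biUnion_finset_image, hS', union_inter_distrib_right, Ioc_inter_Ioi,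
      Ioc_eq_empty (not_lt.2 (hBβ.trans (le_max_right _ _))), empty_union, iUnion₂_inter]
    simp_rw [Ioc_inter_Ioi]
  have hcard : F'.card < n :=
    hn ▸ Finset.card_image_le.trans_lt (Finset.card_erase_lt_of_mem hp₀F)
  obtain ⟨G, hG⟩ :=
    ih _ hcard F' (hF' ▸ fun y hy => ⟨hy.2, (hsub hy.1).2⟩) (hF' ▸ hslack) rfl
  exact ⟨_, (hF' ▸ hG).insert hSsub (Ioc_subset_Ioc_left hap₀) (hp₀lt.le.trans hBβ) hβb hlen⟩

theorem IsFinUnionOfIntervals.exists_isRatioCover {t a b : ℝ} {S : Set ℝ}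
    (hS : IsFinUnionOfIntervals S) (ht : 1 ≤ t) (hsub : S ⊆ Ioc a b)
    (hvol : t * volume.real S ≤ b - a) : ∃ G, IsRatioCover t S (Ioc a b) G := by
  obtain ⟨F, rfl⟩ := isFinUnionOfIntervals_iff_exists_finset.1 hS
  exact exists_isRatioCover_biUnion ht F hsub hvol

/-- The conditions of `configRatios`, for an arbitrary index type. -/
structure IsAdmissible {ι : Type*} (t : ℝ) (I S : ι → Set ℝ) : Prop where
  exists_Ioc : ∀ j, ∃ a b, a ≤ b ∧ I j = Ioc a b
  pairwise_disjoint : Pairwise (onFun Disjoint I)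
  subset : ∀ j, S j ⊆ I j
  isFinUnionOfIntervals : ∀ j, IsFinUnionOfIntervals (S j)
  measureReal_eq : ∀ j, volume.real (I j) = t * volume.real (S j)

namespace IsAdmissible

variable {ι : Type*} {t l m : ℝ} {I S : ι → Set ℝ}

lemma ofReal_div_le_WbarU [Fintype ι] (h : IsAdmissible t I S) (u W : ℝ → ℝ) :
    ENNReal.ofReal (W (uMeas u (⋃ j, I j)) / W (uMeas u (⋃ j, S j))) ≤ WbarU u W t := by
  let e := (Fintype.equivFin ι).symm
  refine le_sSup ⟨Fintype.card ι, I ∘ e, S ∘ e, fun _ => h.exists_Ioc _,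
    h.pairwise_disjoint.comp_of_injective e.injective, fun _ => h.subset _,
    fun _ => h.isFinUnionOfIntervals _, fun _ => h.measureReal_eq _, ?_⟩
  simp only [comp_def, e.surjective.iUnion_comp I, e.surjective.iUnion_comp S]

lemma integrableOn_iUnion [Finite ι] (h : IsAdmissible t I S) {u : ℝ → ℝ}
    (hu : LocallyIntegrable u) : IntegrableOn u (⋃ j, I j) := by
  refine integrableOn_finite_iUnion.2 fun j => ?_
  obtain ⟨a, b, -, hI⟩ := h.exists_Ioc j
  exact hI ▸ (hu.integrableOn_isCompact isCompact_Icc).mono_set Ioc_subset_Icc_self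

lemma exists_isRatioCover (h : IsAdmissible (l * m) I S) (hl : 1 ≤ l) (hm : 1 ≤ m) :
    ∃ G : ι → Finset (ℝ × ℝ), ∀ j, IsRatioCover m (S j) (I j) (G j) := by
  have hG : ∀ j, ∃ G, IsRatioCover m (S j) (I j) G := fun j => by
    obtain ⟨a, b, hab, hI⟩ := h.exists_Ioc j
    have hvol := h.measureReal_eq j
    rw [hI, Real.volume_real_Ioc_of_le hab] at hvol
    rw [hI]
    refine (h.isFinUnionOfIntervals j).exists_isRatioCover hm (hI ▸ h.subset j) ?_
    nlinarith [measureReal_nonneg (μ := volume) (s := S j)]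
  choose G hG using hG
  exact ⟨G, hG⟩

variable {G : ι → Finset (ℝ × ℝ)}

lemma biUnion_ratioCover (h : IsAdmissible (l * m) I S) (hm : 0 ≤ m)
    (hG : ∀ j, IsRatioCover m (S j) (I j) (G j)) :
    IsAdmissible l I fun j => ⋃ p ∈ G j, Ioc p.1 p.2 where
  exists_Ioc := h.exists_Ioc
  pairwise_disjoint := h.pairwise_disjoint
  subset j := iUnion₂_subset (hG j).Ioc_subset
  isFinUnionOfIntervals j := isFinUnionOfIntervals_iff_exists_finset.2 ⟨G j, rfl⟩
  measureReal_eq j := by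
    rw [(hG j).measureReal_biUnion hm (h.isFinUnionOfIntervals j).measurableSet,
      h.measureReal_eq, mul_assoc]

lemma sigma_ratioCover (h : IsAdmissible t I S) (hm : 0 ≤ m)
    (hG : ∀ j, IsRatioCover m (S j) (I j) (G j)) :
    IsAdmissible m (fun x : Σ j, G j => Ioc x.2.1.1 x.2.1.2)
      (fun x => S x.1 ∩ Ioc x.2.1.1 x.2.1.2) where
  exists_Ioc x := ⟨_, _, (hG x.1).fst_le_snd hm x.2.2, rfl⟩
  pairwise_disjoint := by
    rintro ⟨j, p, hp⟩ ⟨j', p', hp'⟩ hne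
    by_cases hj : j = j'
    · subst hj
      exact (hG j).pairwiseDisjoint hp hp' fun hpp' => hne (by subst hpp'; rfl)
    · exact (h.pairwise_disjoint hj).mono ((hG j).Ioc_subset p hp) ((hG j').Ioc_subset p' hp')
  subset _ := inter_subset_right
  isFinUnionOfIntervals x := (h.isFinUnionOfIntervals x.1).inter_Ioc _ _
  measureReal_eq x := by
    rw [Real.volume_real_Ioc_of_le ((hG x.1).fst_le_snd hm x.2.2)]
    exact (hG x.1).length_eq _ x.2.2

end IsAdmissible

lemma iUnion_sigma_Ioc {ι : Type*} (G : ι → Finset (ℝ × ℝ)) :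
    ⋃ x : Σ j, G j, Ioc x.2.1.1 x.2.1.2 = ⋃ j, ⋃ p ∈ G j, Ioc p.1 p.2 := by
  simp [iUnion_sigma, iUnion_subtype]

lemma IsRatioCover.iUnion_sigma_inter {ι : Type*} {t : ℝ} {S I : ι → Set ℝ}
    {G : ι → Finset (ℝ × ℝ)} (hG : ∀ j, IsRatioCover t (S j) (I j) (G j)) :
    ⋃ x : Σ j, G j, S x.1 ∩ Ioc x.2.1.1 x.2.1.2 = ⋃ j, S j := by
  simp only [iUnion_sigma, iUnion_subtype]
  exact iUnion_congr fun j => by rw [← inter_iUnion₂, inter_eq_left.2 (hG j).subset_biUnion]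

lemma uMeas_nonneg {u : ℝ → ℝ} (hu : ∀ x, 0 ≤ u x) (E : Set ℝ) : 0 ≤ uMeas u E :=
  integral_nonneg hu

lemma uMeas_mono {u : ℝ → ℝ} (hu : ∀ x, 0 ≤ u x) {D E : Set ℝ} (hE : IntegrableOn u E)
    (hDE : D ⊆ E) : uMeas u D ≤ uMeas u E :=
  setIntegral_mono_set hE (ae_of_all _ hu) hDE.eventuallyLE

lemma ofReal_div_eq_ofReal_div_mul_ofReal_div (a : ℝ) {b c : ℝ} (hb : 0 < b) (hc : 0 < c) :
    ENNReal.ofReal (a / c) = ENNReal.ofReal (a / b) * ENNReal.ofReal (b / c) := by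
  rw [← ENNReal.ofReal_mul' (div_nonneg hb.le hc.le), div_mul_div_cancel₀ hb.ne']

theorem stmt_10_general (u w W : ℝ → ℝ)
    (hu : ∀ x, 0 < u x) (huloc : LocallyIntegrable u)
    (hW : ∀ t, W t = ∫ s in Set.Ioc (0 : ℝ) t, w s)
    (hWpos : ∀ t > (0 : ℝ), 0 < W t) :
    ∀ l m : ℝ, 1 ≤ l → 1 ≤ m → WbarU u W (l * m) ≤ WbarU u W l * WbarU u W m := by
  intro l m hl hm
  have hu₀ : ∀ x, 0 ≤ u x := fun x => (hu x).le
  refine sSup_le ?_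
  rintro _ ⟨J, I, S, hI, hdisj, hsub, hfin, hvol, rfl⟩
  have hadm : IsAdmissible (l * m) I S := ⟨hI, hdisj, hsub, hfin, hvol⟩
  obtain ⟨G, hG⟩ := hadm.exists_isRatioCover hl hm
  have hm₀ : 0 ≤ m := zero_le_one.trans hm
  have hT := hadm.biUnion_ratioCover hm₀ hG
  rcases (uMeas_nonneg hu₀ (⋃ j, S j)).eq_or_lt with hS₀ | hS₀
  · -- `W 0 = 0`, and dividing by `0` gives `0`
    simp [← hS₀, hW]
  have hST : uMeas u (⋃ j, S j) ≤ uMeas u (⋃ j, ⋃ p ∈ G j, Ioc p.1 p.2) :=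
    uMeas_mono hu₀ ((hadm.integrableOn_iUnion huloc).mono_set (iUnion_mono fun j => hT.subset j))
      (iUnion_mono fun j => (hG j).subset_biUnion)
  rw [ofReal_div_eq_ofReal_div_mul_ofReal_div _ (hWpos _ (hS₀.trans_le hST)) (hWpos _ hS₀)]
  refine mul_le_mul' (hT.ofReal_div_le_WbarU u W) ?_
  simpa only [iUnion_sigma_Ioc, IsRatioCover.iUnion_sigma_inter hG] using
    (hadm.sigma_ratioCover hm₀ hG).ofReal_div_le_WbarU u W

/-- Lemma 3.2: `W̄_u` is submultiplicative on `[1, ∞)`. -/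
theorem stmt_10 (u w W : ℝ → ℝ)
    (hu : ∀ x, 0 < u x) (huloc : LocallyIntegrable u)
    (hw : ∀ t > (0 : ℝ), 0 ≤ w t)
    (hW : ∀ t, W t = ∫ s in Set.Ioc (0 : ℝ) t, w s)
    (hWpos : ∀ t > (0 : ℝ), 0 < W t) :
    ∀ l m : ℝ, 1 ≤ l → 1 ≤ m → WbarU u W (l * m) ≤ WbarU u W l * WbarU u W m :=
  stmt_10_general u w W hu huloc hW hWpos
end

section
/- Given an interval I ⊂ ℝ and S = ⋃_{j=1}^m S_j ⊂ I a finite union of pairwise disjoint intervals with |S| > 0, there exists a function f : ℝ → [0, 1] supported in I such that: (i) f(x) = 1 for x ∈ S; (ii) f(x) ≥ |S|/|I| for x ∈ I; (iii) for every λ with |S|/|I| < λ ≤ 1, the level set {x : f(x) ≥ λ} is a finite union of pairwise disjoint intervals J_{k,λ}, each satisfying |S ∩ J_{k,λ}| = λ|J_{k,λ}|, and J_{k,λ} ∩ S is a union of some of the intervals S_j. -/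
/-!
Sort the intervals `Sⱼ` from left to right. At a level `l ∈ (|S|/|I|, 1]`, sweep through them
greedily: an interval opens a new block at its left end unless it starts inside the current
block, and every interval stretches its block to the right by `|Sⱼ|/l`. Each finished block
therefore carries exactly `l` times its length of `S`, and meets `S` in whole intervals `Sⱼ`.
As soon as the intervals still to come could no longer fit before `b` at density `l`, they are
all gathered instead into a wall `[b - (remaining mass)/l, b)`, again of density `l`.

The resulting sets `U l` shrink as `l` grows, and they are left-continuous in `l`: the block ends
and the start of the wall depend continuously on `l`, and the index of the first walled interval
is locally constant from the left. Hence `f x = sup {l | x ∈ U l}` has superlevel sets exactly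
`U l`.
-/

open MeasureTheory Function Set Filter Topology

section LayerCake

variable {α : Type*} (s : ℝ) (U : ℝ → Set α)

noncomputable def levelSup (x : α) : ℝ := sSup (insert s {t | s < t ∧ t ≤ 1 ∧ x ∈ U t})

variable {s U}

lemma levelSup_bddAbove (hs : s ≤ 1) (x : α) :
    BddAbove (insert s {t | s < t ∧ t ≤ 1 ∧ x ∈ U t}) :=
  ⟨1, by rintro t (rfl | ⟨-, ht, -⟩) <;> assumption⟩

lemma le_levelSup (hs : s ≤ 1) (x : α) : s ≤ levelSup s U x :=
  le_csSup (levelSup_bddAbove hs x) (mem_insert _ _)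

lemma levelSup_le_one (hs : s ≤ 1) (x : α) : levelSup s U x ≤ 1 :=
  csSup_le (insert_nonempty _ _) (by rintro t (rfl | ⟨-, ht, -⟩) <;> assumption)

lemma setOf_le_levelSup {l : ℝ} (hsl : s < l) (hl : l ≤ 1) (hanti : AntitoneOn U (Ioi s))
    (hcont : ⋂ μ ∈ Ioo s l, U μ ⊆ U l) : {x | l ≤ levelSup s U x} = U l := by
  have hs : s ≤ 1 := hsl.le.trans hl
  ext x
  refine ⟨fun hx => hcont (mem_iInter₂.2 fun μ hμ => ?_), fun hx => ?_⟩
  · obtain ⟨t, ht, hμt⟩ := exists_lt_of_lt_csSup (insert_nonempty _ _) (hμ.2.trans_le hx)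
    rcases ht with rfl | ⟨hst, -, hxt⟩
    · exact absurd hμ.1 hμt.not_gt
    · exact hanti hμ.1 hst hμt.le hxt
  · exact le_csSup (levelSup_bddAbove hs x) (Or.inr ⟨hsl, hl, hx⟩)

end LayerCake

lemma le_of_disjoint_Ioo {α : Type*} [LinearOrder α] [DenselyOrdered α] {c₁ d₁ c₂ d₂ : α}
    (hc : c₁ ≤ c₂) (h₂ : c₂ < d₂) (hdisj : Disjoint (Ioo c₁ d₁) (Ioo c₂ d₂)) : d₁ ≤ c₂ := by
  rw [Ioo_disjoint_Ioo, max_eq_right hc] at hdisj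
  exact (min_le_iff.1 hdisj).resolve_right h₂.not_ge

/-- The intervals `(c n, d n)` sorted from left to right; from index `m` on they degenerate to
the point `b`. -/
structure IntervalChain (a b : ℝ) (m : ℕ) where
  c : ℕ → ℝ
  d : ℕ → ℝ
  a_lt_b : a < b
  a_le_c_zero : a ≤ c 0
  c_le_d : ∀ n, c n ≤ d n
  d_le_c_succ : ∀ n, d n ≤ c (n + 1)
  c_eq_of_le : ∀ n, m ≤ n → c n = b

namespace IntervalChain

variable {a b : ℝ} {m : ℕ} (K : IntervalChain a b m)

def seg (n : ℕ) : Set ℝ := Ioo (K.c n) (K.d n)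

def S : Set ℝ := ⋃ n, K.seg n

noncomputable def len (n : ℕ) : ℝ := K.d n - K.c n

noncomputable def lenSum (k : ℕ) : ℝ := ∑ n ∈ Finset.range k, K.len n

noncomputable def mass : ℝ := K.lenSum m

noncomputable def density : ℝ := K.mass / (b - a)

lemma c_mono : Monotone K.c :=
  monotone_nat_of_le_succ fun n => (K.c_le_d n).trans (K.d_le_c_succ n)

lemma d_eq_of_le {n : ℕ} (hn : m ≤ n) : K.d n = b := by
  have h₁ := K.d_le_c_succ n
  have h₂ := K.c_le_d n
  rw [K.c_eq_of_le _ (by omega)] at h₁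
  rw [K.c_eq_of_le _ hn] at h₂
  exact le_antisymm h₁ h₂

lemma a_le_c (n : ℕ) : a ≤ K.c n := K.a_le_c_zero.trans (K.c_mono n.zero_le)

lemma c_le_b (n : ℕ) : K.c n ≤ b := by
  rcases le_total m n with h | h
  · exact (K.c_eq_of_le n h).le
  · simpa [K.c_eq_of_le m le_rfl] using K.c_mono h

lemma d_le_b (n : ℕ) : K.d n ≤ b := (K.d_le_c_succ n).trans (K.c_le_b _)

lemma d_le_c {n n' : ℕ} (h : n < n') : K.d n ≤ K.c n' :=
  (K.d_le_c_succ n).trans (K.c_mono h)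

lemma seg_eq_empty {n : ℕ} (hn : m ≤ n) : K.seg n = ∅ := by
  simp [seg, K.c_eq_of_le n hn, K.d_eq_of_le hn]

lemma seg_subset_Ioo (n : ℕ) : K.seg n ⊆ Ioo a b :=
  Ioo_subset_Ioo (K.a_le_c n) (K.d_le_b n)

lemma S_subset_Ioo : K.S ⊆ Ioo a b := iUnion_subset K.seg_subset_Ioo

lemma pairwise_disjoint_seg : Pairwise (Disjoint on K.seg) := by
  have key : ∀ {n n'}, n < n' → Disjoint (K.seg n) (K.seg n') := fun h =>
    Ioo_disjoint_Ioo.2 ((min_le_left _ _).trans ((K.d_le_c h).trans (le_max_right _ _)))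
  intro n n' hne
  rcases lt_or_gt_of_ne hne with h | h
  exacts [key h, (key h).symm]

lemma len_nonneg (n : ℕ) : 0 ≤ K.len n := sub_nonneg.2 (K.c_le_d n)

lemma lenSum_mono : Monotone K.lenSum := fun _ _ h =>
  Finset.sum_le_sum_of_subset_of_nonneg (Finset.range_subset_range.2 h)
    fun n _ _ => K.len_nonneg n

lemma lenSum_succ (k : ℕ) : K.lenSum (k + 1) = K.lenSum k + K.len k := Finset.sum_range_succ _ _

lemma lenSum_nonneg (k : ℕ) : 0 ≤ K.lenSum k :=
  Finset.sum_nonneg fun n _ => K.len_nonneg n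

lemma lenSum_le_mass (k : ℕ) : K.lenSum k ≤ K.mass := by
  rcases le_total k m with h | h
  · exact K.lenSum_mono h
  · refine le_of_eq (Finset.sum_subset (Finset.range_subset_range.2 h) fun n _ hn => ?_).symm
    simp [len, K.c_eq_of_le n (by simpa using hn), K.d_eq_of_le (by simpa using hn : m ≤ n)]

lemma mass_nonneg : 0 ≤ K.mass := K.lenSum_nonneg m

lemma volume_biUnion_seg (T : Finset ℕ) :
    volume (⋃ n ∈ T, K.seg n) = ENNReal.ofReal (∑ n ∈ T, K.len n) := by
  rw [measure_biUnion_finset (K.pairwise_disjoint_seg.set_pairwise _)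
    fun n _ => measurableSet_Ioo, ENNReal.ofReal_sum_of_nonneg fun n _ => K.len_nonneg n]
  exact Finset.sum_congr rfl fun n _ => Real.volume_Ioo

lemma volume_biUnion_Ico_seg {p q : ℕ} (h : p ≤ q) :
    volume (⋃ n ∈ Finset.Ico p q, K.seg n) = ENNReal.ofReal (K.lenSum q - K.lenSum p) := by
  rw [volume_biUnion_seg, Finset.sum_Ico_eq_sub _ h]; rfl

lemma lt_of_mem_seg {n : ℕ} {x : ℝ} (hx : x ∈ K.seg n) : n < m := by
  by_contra! h
  simp [K.seg_eq_empty h] at hx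

lemma S_eq_biUnion_range : K.S = ⋃ n ∈ Finset.range m, K.seg n := by
  ext x
  simp only [S, mem_iUnion, Finset.mem_range, exists_prop]
  exact ⟨fun ⟨n, hx⟩ => ⟨n, K.lt_of_mem_seg hx, hx⟩, fun ⟨n, _, hx⟩ => ⟨n, hx⟩⟩

lemma volume_S : volume K.S = ENNReal.ofReal K.mass := by
  rw [S_eq_biUnion_range, volume_biUnion_seg]
  rfl

lemma density_nonneg : 0 ≤ K.density :=
  div_nonneg K.mass_nonneg (sub_nonneg.2 K.a_lt_b.le)

lemma mass_le : K.mass ≤ b - a := by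
  rw [← ENNReal.ofReal_le_ofReal_iff (sub_nonneg.2 K.a_lt_b.le), ← volume_S,
    ← Real.volume_Ioo]
  exact measure_mono K.S_subset_Ioo

lemma density_le_one : K.density ≤ 1 := (div_le_one (sub_pos.2 K.a_lt_b)).2 K.mass_le

section Level

variable {l μ ν : ℝ}

noncomputable def reach (l : ℝ) : ℕ → ℝ
  | 0 => K.c 0 + K.len 0 / l
  | n + 1 => max (reach l n) (K.c (n + 1)) + K.len (n + 1) / l

/-- The index of the interval that opened the block containing interval `n`. -/
noncomputable def head (l : ℝ) : ℕ → ℕ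
  | 0 => 0
  | n + 1 => if K.reach l n < K.c (n + 1) then n + 1 else head l n

lemma c_add_le_reach (l : ℝ) (n : ℕ) : K.c n + K.len n / l ≤ K.reach l n := by
  cases n with
  | zero => rw [reach]
  | succ n => rw [reach]; gcongr; exact le_max_right _ _

lemma d_le_reach (hl : 0 < l) (hl₁ : l ≤ 1) (n : ℕ) : K.d n ≤ K.reach l n := by
  have : K.len n ≤ K.len n / l := le_div_self (K.len_nonneg n) hl hl₁
  linarith [K.c_add_le_reach l n, show K.d n = K.c n + K.len n by simp [len]]

lemma reach_mono (hl : 0 < l) : Monotone (K.reach l) :=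
  monotone_nat_of_le_succ fun n => by
    rw [reach]
    linarith [le_max_left (K.reach l n) (K.c (n + 1)),
      div_nonneg (K.len_nonneg (n + 1)) hl.le]

lemma reach_antitone_level (hμ : 0 < μ) (hμν : μ ≤ ν) (n : ℕ) :
    K.reach ν n ≤ K.reach μ n := by
  induction n with
  | zero => rw [reach, reach]; gcongr; exact K.len_nonneg 0
  | succ n ih => rw [reach, reach]; gcongr; exact K.len_nonneg _

lemma continuousAt_reach (hl : l ≠ 0) (n : ℕ) : ContinuousAt (fun t => K.reach t n) l := by
  induction n with
  | zero =>
    simp only [reach]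
    exact continuousAt_const.add (continuousAt_const.div continuousAt_id hl)
  | succ n ih =>
    simp only [reach]
    exact (ih.max continuousAt_const).add (continuousAt_const.div continuousAt_id hl)

lemma head_le (l : ℝ) (n : ℕ) : K.head l n ≤ n := by
  induction n with
  | zero => rfl
  | succ n ih => rw [head]; split_ifs <;> omega

lemma head_succ_of_lt {n : ℕ} (h : K.reach l n < K.c (n + 1)) : K.head l (n + 1) = n + 1 := by
  rw [head, if_pos h]

lemma head_succ_of_le {n : ℕ} (h : K.c (n + 1) ≤ K.reach l n) :
    K.head l (n + 1) = K.head l n := by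
  rw [head, if_neg h.not_gt]

lemma head_mono (l : ℝ) : Monotone (K.head l) :=
  monotone_nat_of_le_succ fun n => by
    rw [head]; split_ifs
    · exact (K.head_le l n).trans n.le_succ
    · exact le_rfl

lemma reach_eq (l : ℝ) (n : ℕ) :
    K.reach l n = K.c (K.head l n) + (K.lenSum (n + 1) - K.lenSum (K.head l n)) / l := by
  induction n with
  | zero => simp [reach, head, lenSum]
  | succ n ih =>
    rw [reach, lenSum_succ (k := n + 1)]
    rcases lt_or_ge (K.reach l n) (K.c (n + 1)) with h | h
    · rw [max_eq_right h.le, K.head_succ_of_lt h]; ring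
    · rw [max_eq_left h, K.head_succ_of_le h, ih]; ring

lemma exists_wall (l : ℝ) : ∃ j, b ≤ K.c j + (K.mass - K.lenSum j) / l :=
  ⟨m, by simp [K.c_eq_of_le m le_rfl, mass]⟩

/-- The first interval from which the remaining mass, spread at density `l`, reaches `b`. -/
noncomputable def wallIndex (l : ℝ) : ℕ := Nat.find (K.exists_wall l)

noncomputable def wallStart (l : ℝ) : ℝ := b - (K.mass - K.lenSum (K.wallIndex l)) / l

def levelSet (l : ℝ) : Set ℝ :=
  (⋃ i < K.wallIndex l, Ioc (K.c i) (K.reach l i)) ∪ Ico (K.wallStart l) b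

lemma b_le_c_wallIndex_add (l : ℝ) :
    b ≤ K.c (K.wallIndex l) + (K.mass - K.lenSum (K.wallIndex l)) / l :=
  Nat.find_spec (K.exists_wall l)

lemma lt_of_lt_wallIndex {j : ℕ} (hj : j < K.wallIndex l) :
    K.c j + (K.mass - K.lenSum j) / l < b :=
  not_le.1 (Nat.find_min _ hj)

lemma wallIndex_le (l : ℝ) : K.wallIndex l ≤ m :=
  Nat.find_min' _ (by simp [K.c_eq_of_le m le_rfl, mass])

lemma wallStart_le_c (l : ℝ) : K.wallStart l ≤ K.c (K.wallIndex l) := by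
  have := K.b_le_c_wallIndex_add l
  rw [wallStart]; linarith

lemma wallStart_le_b (hl : 0 < l) : K.wallStart l ≤ b :=
  sub_le_self _ (div_nonneg (sub_nonneg.2 (K.lenSum_le_mass _)) hl.le)

lemma reach_lt_wallStart (hl : 0 < l) {i : ℕ} (hi : i < K.wallIndex l) :
    K.reach l i < K.wallStart l := by
  have hhead := K.lt_of_lt_wallIndex ((K.head_le l i).trans_lt hi)
  have hrest : (K.mass - K.lenSum (K.wallIndex l)) / l ≤ (K.mass - K.lenSum (i + 1)) / l := by
    gcongr; exact K.lenSum_mono hi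
  rw [K.reach_eq l, wallStart]
  have : (K.lenSum (i + 1) - K.lenSum (K.head l i)) / l + (K.mass - K.lenSum (i + 1)) / l
      = (K.mass - K.lenSum (K.head l i)) / l := by ring
  linarith

lemma reach_lt_c_of_succ_eq_wallIndex (hl : 0 < l) {i : ℕ} (hi : i + 1 = K.wallIndex l) :
    K.reach l i < K.c (i + 1) :=
  (K.reach_lt_wallStart hl (by omega)).trans_le (hi ▸ K.wallStart_le_c l)

lemma a_lt_wallStart (hsl : K.density < l) : a < K.wallStart l := by
  have hl : 0 < l := K.density_nonneg.trans_lt hsl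
  have hmass : K.mass / l < b - a := by
    rw [div_lt_iff₀ hl, mul_comm, ← div_lt_iff₀ (sub_pos.2 K.a_lt_b)]; exact hsl
  have : (K.mass - K.lenSum (K.wallIndex l)) / l ≤ K.mass / l := by
    gcongr; exact sub_le_self _ (K.lenSum_nonneg _)
  rw [wallStart]; linarith

lemma levelSet_subset_Ioo (hsl : K.density < l) : K.levelSet l ⊆ Ioo a b := by
  have hl : 0 < l := K.density_nonneg.trans_lt hsl
  refine union_subset (iUnion₂_subset fun i hi => ?_) fun x hx => ?_
  · exact Ioc_subset_Ioo_right ((K.reach_lt_wallStart hl hi).trans_le (K.wallStart_le_b hl))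
      |>.trans (Ioo_subset_Ioo_left (K.a_le_c i))
  · exact ⟨(K.a_lt_wallStart hsl).trans_le hx.1, hx.2⟩

lemma S_subset_levelSet (hl : 0 < l) (hl₁ : l ≤ 1) : K.S ⊆ K.levelSet l := by
  refine iUnion_subset fun n x hx => ?_
  rcases lt_or_ge n (K.wallIndex l) with h | h
  · exact Or.inl (mem_iUnion₂.2 ⟨n, h, hx.1, hx.2.le.trans (K.d_le_reach hl hl₁ n)⟩)
  · exact Or.inr ⟨(K.wallStart_le_c l).trans ((K.c_mono h).trans hx.1.le),
      hx.2.trans_le (K.d_le_b n)⟩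

lemma wallIndex_mono (hμ : 0 < μ) (hμν : μ ≤ ν) : K.wallIndex μ ≤ K.wallIndex ν := by
  refine Nat.find_min' _ ?_
  have := K.b_le_c_wallIndex_add ν
  have : (K.mass - K.lenSum (K.wallIndex ν)) / ν ≤ (K.mass - K.lenSum (K.wallIndex ν)) / μ :=
    div_le_div_of_nonneg_left (sub_nonneg.2 (K.lenSum_le_mass _)) hμ hμν
  linarith

lemma wallStart_mono (hμ : 0 < μ) (hμν : μ ≤ ν) : K.wallStart μ ≤ K.wallStart ν := by
  have hidx := K.lenSum_mono (K.wallIndex_mono hμ hμν)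
  have hrest := sub_nonneg.2 (K.lenSum_le_mass (K.wallIndex ν))
  rw [wallStart, wallStart]
  refine sub_le_sub_left ((div_le_div_of_nonneg_left hrest hμ hμν).trans ?_) b
  gcongr

lemma levelSet_antitoneOn : AntitoneOn K.levelSet (Ioi K.density) := by
  intro μ hμ ν _ hμν x hx
  have hμ₀ : 0 < μ := K.density_nonneg.trans_lt hμ
  have hν₀ : 0 < ν := hμ₀.trans_le hμν
  rcases hx with hx | hx
  · obtain ⟨i, hi, hxi⟩ := mem_iUnion₂.1 hx
    rcases lt_or_ge i (K.wallIndex μ) with h | h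
    · exact Or.inl (mem_iUnion₂.2
        ⟨i, h, hxi.1, hxi.2.trans (K.reach_antitone_level hμ₀ hμν i)⟩)
    · refine Or.inr ⟨(K.wallStart_le_c μ).trans ((K.c_mono h).trans hxi.1.le), ?_⟩
      exact hxi.2.trans_lt ((K.reach_lt_wallStart hν₀ hi).trans_le (K.wallStart_le_b hν₀))
  · exact Or.inr ⟨(K.wallStart_mono hμ₀ hμν).trans hx.1, hx.2⟩

lemma eventually_wallIndex_eq (hl : 0 < l) :
    ∀ᶠ μ in 𝓝[<] l, K.wallIndex μ = K.wallIndex l := by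
  have hlt : ∀ᶠ μ in 𝓝 l, ∀ j ∈ Finset.range (K.wallIndex l),
      K.c j + (K.mass - K.lenSum j) / μ < b :=
    (Finset.eventually_all _).2 fun j hj =>
      Tendsto.eventually_lt_const (K.lt_of_lt_wallIndex (Finset.mem_range.1 hj))
        (continuousAt_const.add (continuousAt_const.div continuousAt_id hl.ne'))
  filter_upwards [eventually_nhdsWithin_of_eventually_nhds hlt, Ioo_mem_nhdsLT hl] with μ hμ hμl
  refine le_antisymm (K.wallIndex_mono hμl.1 hμl.2.le) (not_lt.1 fun h => ?_)
  exact (hμ _ (Finset.mem_range.2 h)).not_ge (K.b_le_c_wallIndex_add μ)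

lemma eventually_notMem_levelSet (hl : 0 < l) {x : ℝ} (hx : x ∉ K.levelSet l) :
    ∀ᶠ μ in 𝓝[<] l, x ∉ K.levelSet μ := by
  simp only [levelSet, mem_union, mem_iUnion₂, not_or, not_exists] at hx
  obtain ⟨hblocks, hwall⟩ := hx
  have hreach : ∀ᶠ μ in 𝓝 l, ∀ i ∈ Finset.range (K.wallIndex l),
      x ∉ Ioc (K.c i) (K.reach μ i) := by
    refine (Finset.eventually_all _).2 fun i hi => ?_
    by_cases hcx : K.c i < x
    · have hrx : K.reach l i < x :=
        lt_of_not_ge fun h => hblocks i (Finset.mem_range.1 hi) ⟨hcx, h⟩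
      filter_upwards [Tendsto.eventually_lt_const hrx (K.continuousAt_reach hl.ne' i)]
        with μ hμ hmem
      exact hμ.not_ge hmem.2
    · exact Eventually.of_forall fun μ hmem => hcx hmem.1
  have hstart :
      ∀ᶠ μ in 𝓝 l, b ≤ x ∨ x < b - (K.mass - K.lenSum (K.wallIndex l)) / μ := by
    by_cases hb : b ≤ x
    · exact Eventually.of_forall fun _ => Or.inl hb
    · have hxw : x < K.wallStart l := lt_of_not_ge fun h => hwall ⟨h, lt_of_not_ge hb⟩
      exact (Tendsto.eventually_const_lt hxw
        (continuousAt_const.sub (continuousAt_const.div continuousAt_id hl.ne'))).mono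
        fun _ h => Or.inr h
  filter_upwards [K.eventually_wallIndex_eq hl, eventually_nhdsWithin_of_eventually_nhds hreach,
    eventually_nhdsWithin_of_eventually_nhds hstart] with μ hidx hμ hμ'
  simp only [levelSet, mem_union, mem_iUnion₂, not_or, not_exists, hidx]
  refine ⟨fun i hi => hμ i (Finset.mem_range.2 hi), fun h => ?_⟩
  rw [wallStart, hidx] at h
  rcases hμ' with h' | h'
  exacts [h'.not_gt h.2, h'.not_ge h.1]

lemma biInter_levelSet_subset (hsl : K.density < l) :
    ⋂ μ ∈ Ioo K.density l, K.levelSet μ ⊆ K.levelSet l := by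
  intro x hx
  by_contra hxl
  obtain ⟨μ, hμ, hμl⟩ :=
    ((K.eventually_notMem_levelSet (K.density_nonneg.trans_lt hsl) hxl).and
      (Ioo_mem_nhdsLT hsl)).exists
  exact hμ (mem_iInter₂.1 hx μ hμl)

end Level

noncomputable def f : ℝ → ℝ := (Ioo a b).indicator (levelSup K.density K.levelSet)

lemma f_eq_zero {x : ℝ} (hx : x ∉ Ioo a b) : K.f x = 0 := indicator_of_notMem hx _

lemma density_le_f {x : ℝ} (hx : x ∈ Ioo a b) : K.density ≤ K.f x := by
  rw [f, indicator_of_mem hx]; exact le_levelSup K.density_le_one x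

lemma f_nonneg (x : ℝ) : 0 ≤ K.f x := by
  by_cases hx : x ∈ Ioo a b
  exacts [K.density_nonneg.trans (K.density_le_f hx), (K.f_eq_zero hx).ge]

lemma f_le_one (x : ℝ) : K.f x ≤ 1 := by
  by_cases hx : x ∈ Ioo a b
  · rw [f, indicator_of_mem hx]; exact levelSup_le_one K.density_le_one x
  · rw [K.f_eq_zero hx]; exact zero_le_one

lemma setOf_le_f {l : ℝ} (hsl : K.density < l) (hl₁ : l ≤ 1) :
    {x | l ≤ K.f x} = K.levelSet l := by
  have hlev := setOf_le_levelSup hsl hl₁ K.levelSet_antitoneOn (K.biInter_levelSet_subset hsl)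
  ext x
  by_cases hx : x ∈ Ioo a b
  · rw [mem_ofPred_eq, f, indicator_of_mem hx, ← hlev]; rfl
  · rw [mem_ofPred_eq, K.f_eq_zero hx]
    exact iff_of_false (K.density_nonneg.trans_lt hsl).not_ge
      fun h => hx (K.levelSet_subset_Ioo hsl h)

lemma f_eq_one {x : ℝ} (hx : x ∈ K.S) : K.f x = 1 := by
  refine le_antisymm (K.f_le_one x) ?_
  rcases K.density_le_one.lt_or_eq with hs | hs
  · have : x ∈ {x | 1 ≤ K.f x} := by
      rw [K.setOf_le_f hs le_rfl]; exact K.S_subset_levelSet one_pos le_rfl hx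
    exact this
  · exact hs ▸ K.density_le_f (K.S_subset_Ioo hx)

section Decomposition

variable {l : ℝ}

lemma exists_blockEnd (hl : 0 < l) {i : ℕ} (hi : i < K.wallIndex l) :
    ∃ e, i ≤ e ∧ e < K.wallIndex l ∧ K.reach l e < K.c (e + 1) ∧
      K.head l e = K.head l i := by
  obtain ⟨d, hd⟩ := Nat.exists_eq_add_of_lt hi
  induction d generalizing i with
  | zero => exact ⟨i, le_rfl, hi, K.reach_lt_c_of_succ_eq_wallIndex hl (by omega), rfl⟩
  | succ d ih =>
    by_cases hend : K.reach l i < K.c (i + 1)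
    · exact ⟨i, le_rfl, hi, hend, rfl⟩
    · obtain ⟨e, hie, he, hend', hhead⟩ := ih (i := i + 1) (by omega) (by omega)
      exact ⟨e, by omega, he, hend', hhead.trans (K.head_succ_of_le (not_lt.1 hend))⟩

lemma Ioc_head_subset (l : ℝ) (n : ℕ) :
    Ioc (K.c (K.head l n)) (K.reach l n) ⊆ ⋃ i ≤ n, Ioc (K.c i) (K.reach l i) := by
  induction n with
  | zero => exact fun x hx => mem_iUnion₂.2 ⟨0, le_rfl, hx⟩
  | succ n ih =>
    intro x hx
    rcases lt_or_ge (K.reach l n) (K.c (n + 1)) with h | h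
    · rw [K.head_succ_of_lt h] at hx
      exact mem_iUnion₂.2 ⟨n + 1, le_rfl, hx⟩
    · rw [K.head_succ_of_le h] at hx
      rcases le_or_gt x (K.reach l n) with hxn | hxn
      · obtain ⟨i, hi, hxi⟩ := mem_iUnion₂.1 (ih ⟨hx.1, hxn⟩)
        exact mem_iUnion₂.2 ⟨i, hi.trans n.le_succ, hxi⟩
      · exact mem_iUnion₂.2 ⟨n + 1, le_rfl, h.trans_lt hxn, hx.2⟩

/-- Below the wall index, `piece l k` is the block closed by interval `k` (empty if interval `k`
does not close its block); at and above it, the wall. -/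
noncomputable def piece (l : ℝ) (k : ℕ) : Set ℝ :=
  if k < K.wallIndex l then
    if K.reach l k < K.c (k + 1) then Ioc (K.c (K.head l k)) (K.reach l k) else ∅
  else Ico (K.wallStart l) b

lemma ordConnected_piece (l : ℝ) (k : ℕ) : (K.piece l k).OrdConnected := by
  unfold piece; split_ifs <;> infer_instance

lemma reach_lt_of_mem_piece (hl : 0 < l) {k k' : ℕ} (hkk' : k < k') (hk' : k' ≤ K.wallIndex l)
    (hend : K.reach l k < K.c (k + 1)) {x : ℝ} (hx : x ∈ K.piece l k') : K.reach l k < x := by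
  rw [piece] at hx
  split_ifs at hx
  · have : K.c (k + 1) ≤ K.c (K.head l k') :=
      K.c_mono (K.head_succ_of_lt hend ▸ K.head_mono l hkk')
    exact hend.trans_le (this.trans hx.1.le)
  · exact hx.elim
  · exact (K.reach_lt_wallStart hl (hkk'.trans_le hk')).trans_le hx.1

lemma disjoint_piece (hl : 0 < l) {k k' : ℕ} (hkk' : k < k') (hk' : k' ≤ K.wallIndex l) :
    Disjoint (K.piece l k) (K.piece l k') := by
  rw [piece, if_pos (hkk'.trans_le hk')]
  split_ifs with hend
  · exact disjoint_left.2 fun x hx hx' =>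
      (K.reach_lt_of_mem_piece hl hkk' hk' hend hx').not_ge hx.2
  · exact empty_disjoint _

lemma levelSet_eq_biUnion_piece (hl : 0 < l) :
    K.levelSet l = ⋃ k ≤ K.wallIndex l, K.piece l k := by
  have hwall : K.piece l (K.wallIndex l) = Ico (K.wallStart l) b := if_neg (lt_irrefl _)
  refine subset_antisymm (union_subset (iUnion₂_subset fun i hi x hx => ?_) ?_) ?_
  · obtain ⟨e, hie, he, hend, hhead⟩ := K.exists_blockEnd hl hi
    refine mem_iUnion₂.2 ⟨e, he.le, ?_⟩
    rw [piece, if_pos he, if_pos hend, hhead]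
    exact ⟨(K.c_mono (K.head_le l i)).trans_lt hx.1, hx.2.trans (K.reach_mono hl hie)⟩
  · exact hwall ▸ fun x hx => mem_iUnion₂.2 ⟨K.wallIndex l, le_rfl, hx⟩
  · refine iUnion₂_subset fun k hk => ?_
    rcases hk.lt_or_eq with hk | rfl
    · rw [piece, if_pos hk]
      split_ifs
      · exact (K.Ioc_head_subset l k).trans fun x hx => by
          obtain ⟨i, hi, hxi⟩ := mem_iUnion₂.1 hx
          exact Or.inl (mem_iUnion₂.2 ⟨i, hi.trans_lt hk, hxi⟩)
      · exact empty_subset _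
    · exact hwall ▸ subset_union_right

lemma block_inter_S (hl : 0 < l) (hl₁ : l ≤ 1) {k : ℕ} (hend : K.reach l k < K.c (k + 1)) :
    Ioc (K.c (K.head l k)) (K.reach l k) ∩ K.S =
      ⋃ n ∈ Finset.Ico (K.head l k) (k + 1), K.seg n := by
  ext x
  simp only [mem_inter_iff, S, mem_iUnion, Finset.mem_Ico, exists_prop]
  constructor
  · rintro ⟨hx, n, hxn⟩
    refine ⟨n, ⟨?_, ?_⟩, hxn⟩
    · by_contra! h
      exact (hxn.2.trans_le ((K.d_le_c h).trans hx.1.le)).false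
    · by_contra! h
      exact (hx.2.trans_lt (hend.trans_le ((K.c_mono h).trans hxn.1.le))).false
  · rintro ⟨n, ⟨h₁, h₂⟩, hxn⟩
    exact ⟨⟨(K.c_mono h₁).trans_lt hxn.1, hxn.2.le.trans
      ((K.d_le_reach hl hl₁ n).trans (K.reach_mono hl (by omega)))⟩, n, hxn⟩

lemma wall_inter_S (hl : 0 < l) (hl₁ : l ≤ 1) :
    Ico (K.wallStart l) b ∩ K.S = ⋃ n ∈ Finset.Ico (K.wallIndex l) m, K.seg n := by
  ext x
  simp only [mem_inter_iff, S, mem_iUnion, Finset.mem_Ico, exists_prop]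
  constructor
  · rintro ⟨hx, n, hxn⟩
    refine ⟨n, ⟨not_lt.1 fun h => ?_, K.lt_of_mem_seg hxn⟩, hxn⟩
    exact (hxn.2.trans_le ((K.d_le_reach hl hl₁ n).trans (K.reach_lt_wallStart hl h).le)).not_ge
      hx.1
  · rintro ⟨n, ⟨h₁, -⟩, hxn⟩
    exact ⟨⟨(K.wallStart_le_c l).trans ((K.c_mono h₁).trans hxn.1.le),
      hxn.2.trans_le (K.d_le_b n)⟩, n, hxn⟩

lemma exists_piece_inter_S (hl : 0 < l) (hl₁ : l ≤ 1) (k : ℕ) :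
    ∃ T : Finset ℕ, K.piece l k ∩ K.S = ⋃ n ∈ T, K.seg n := by
  rw [piece]
  split_ifs with hk hend
  · exact ⟨_, K.block_inter_S hl hl₁ hend⟩
  · exact ⟨∅, by simp⟩
  · exact ⟨_, K.wall_inter_S hl hl₁⟩

lemma volume_S_inter_piece (hl : 0 < l) (hl₁ : l ≤ 1) (k : ℕ) :
    volume (K.S ∩ K.piece l k) = ENNReal.ofReal l * volume (K.piece l k) := by
  rw [piece]
  split_ifs with hk hend
  · rw [inter_comm, K.block_inter_S hl hl₁ hend,
      K.volume_biUnion_Ico_seg ((K.head_le l k).trans k.le_succ), Real.volume_Ioc,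
      ← ENNReal.ofReal_mul hl.le, K.reach_eq l k]
    congr 1; field_simp; ring
  · simp
  · rw [inter_comm, K.wall_inter_S hl hl₁, K.volume_biUnion_Ico_seg (K.wallIndex_le l),
      Real.volume_Ico, ← ENNReal.ofReal_mul hl.le, wallStart]
    congr 1; field_simp; rw [mass]; ring

theorem exists_levelSet_decomposition (hsl : K.density < l) (hl₁ : l ≤ 1) :
    ∃ (N : ℕ) (J : Fin N → Set ℝ), (∀ k, (J k).OrdConnected) ∧
      Pairwise (Disjoint on J) ∧ {x | l ≤ K.f x} = ⋃ k, J k ∧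
      (∀ k, volume (K.S ∩ J k) = ENNReal.ofReal l * volume (J k)) ∧
      ∀ k, ∃ T : Finset ℕ, J k ∩ K.S = ⋃ n ∈ T, K.seg n := by
  have hl : 0 < l := K.density_nonneg.trans_lt hsl
  refine ⟨K.wallIndex l + 1, fun k => K.piece l k, fun k => K.ordConnected_piece l k, ?_, ?_,
    fun k => K.volume_S_inter_piece hl hl₁ k, fun k => K.exists_piece_inter_S hl hl₁ k⟩
  · intro k k' hne
    rcases lt_or_gt_of_ne (Fin.val_ne_of_ne hne) with h | h
    · exact K.disjoint_piece hl h (Nat.lt_succ_iff.1 k'.2)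
    · exact (K.disjoint_piece hl h (Nat.lt_succ_iff.1 k.2)).symm
  · rw [K.setOf_le_f hsl hl₁, K.levelSet_eq_biUnion_piece hl]
    ext x
    simp only [mem_iUnion, exists_prop]
    exact ⟨fun ⟨k, hk, hx⟩ => ⟨⟨k, Nat.lt_succ_of_le hk⟩, hx⟩,
      fun ⟨k, hx⟩ => ⟨k, Nat.lt_succ_iff.1 k.2, hx⟩⟩

end Decomposition

lemma exists_val_eq_of_mem_seg (τ : Fin m ≃ Fin m) {n : ℕ} {x : ℝ} (hx : x ∈ K.seg n) :
    ∃ j, (τ j : ℕ) = n :=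
  ⟨τ.symm ⟨n, K.lt_of_mem_seg hx⟩, by simp⟩

lemma S_eq_iUnion (τ : Fin m ≃ Fin m) : K.S = ⋃ j, K.seg (τ j) := by
  refine subset_antisymm (iUnion_subset fun n x hx => ?_)
    (iUnion_subset fun j => subset_iUnion _ _)
  obtain ⟨j, rfl⟩ := K.exists_val_eq_of_mem_seg τ hx
  exact mem_iUnion.2 ⟨j, hx⟩

lemma biUnion_seg_eq (τ : Fin m ≃ Fin m) (T : Finset ℕ) :
    ⋃ n ∈ T, K.seg n =
      ⋃ j ∈ Finset.univ.filter (fun j => (τ j : ℕ) ∈ T), K.seg (τ j) := by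
  ext x
  simp only [mem_iUnion, Finset.mem_filter, Finset.mem_univ, true_and, exists_prop]
  constructor
  · rintro ⟨n, hn, hx⟩
    obtain ⟨j, rfl⟩ := K.exists_val_eq_of_mem_seg τ hx
    exact ⟨j, hn, hx⟩
  · rintro ⟨j, hj, hx⟩
    exact ⟨τ j, hj, hx⟩

end IntervalChain

theorem exists_intervalChain {a b : ℝ} (hab : a < b) {m : ℕ} {c d : Fin m → ℝ}
    (hcd : ∀ j, c j < d j) (hsub : ∀ j, Ioo (c j) (d j) ⊆ Ioo a b)
    (hdisj : Pairwise (Disjoint on fun j => Ioo (c j) (d j))) :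
    ∃ (K : IntervalChain a b m) (τ : Fin m ≃ Fin m),
      ∀ j, K.seg (τ j) = Ioo (c j) (d j) := by
  set σ := Tuple.sort c
  have hbounds : ∀ j, a ≤ c j ∧ d j ≤ b := fun j => (Ioo_subset_Ioo_iff (hcd j)).1 (hsub j)
  have hsorted : ∀ {i j : Fin m}, i < j → d (σ i) ≤ c (σ j) := fun h =>
    le_of_disjoint_Ioo (Tuple.monotone_sort c h.le) (hcd _) (hdisj (σ.injective.ne h.ne))
  let c' : ℕ → ℝ := fun n => if h : n < m then c (σ ⟨n, h⟩) else b
  let d' : ℕ → ℝ := fun n => if h : n < m then d (σ ⟨n, h⟩) else b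
  refine ⟨⟨c', d', hab, ?_, fun n => ?_, fun n => ?_, fun n hn => dif_neg (by omega)⟩,
    σ.symm, fun j => ?_⟩
  · simp only [c']; split_ifs; exacts [(hbounds _).1, hab.le]
  · simp only [c', d']; split_ifs; exacts [(hcd _).le, le_rfl]
  · simp only [c', d']; split_ifs with h₁ h₂ h₂
    · exact hsorted (Fin.mk_lt_mk.2 n.lt_succ_self)
    · exact (hbounds _).2
    · omega
    · rfl
  · simp [IntervalChain.seg, c', d']

theorem stmt_15_general (a b : ℝ) (hab : a < b) (m : ℕ)
    (c d : Fin m → ℝ) (hcd : ∀ j, c j < d j)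
    (hsub : ∀ j, Set.Ioo (c j) (d j) ⊆ Set.Ioo a b)
    (hdisj : Pairwise (onFun Disjoint fun j => Set.Ioo (c j) (d j)))
    (S : Set ℝ) (hS : S = ⋃ j, Set.Ioo (c j) (d j)) :
    ∃ f : ℝ → ℝ,
      (∀ x, 0 ≤ f x ∧ f x ≤ 1) ∧
      (∀ x ∉ Set.Ioo a b, f x = 0) ∧
      (∀ x ∈ S, f x = 1) ∧
      (∀ x ∈ Set.Ioo a b, (volume S).toReal / (b - a) ≤ f x) ∧
      ∀ l : ℝ, (volume S).toReal / (b - a) < l → l ≤ 1 →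
        ∃ (K : ℕ) (J : Fin K → Set ℝ),
          (∀ k, (J k).OrdConnected) ∧
          Pairwise (onFun Disjoint J) ∧
          {x | l ≤ f x} = ⋃ k, J k ∧
          (∀ k, volume (S ∩ J k) = ENNReal.ofReal l * volume (J k)) ∧
          (∀ k, ∃ T : Finset (Fin m), J k ∩ S = ⋃ j ∈ T, Set.Ioo (c j) (d j)) := by
  obtain ⟨K, τ, hτ⟩ := exists_intervalChain hab hcd hsub hdisj
  obtain rfl : S = K.S := by simp_rw [hS, K.S_eq_iUnion τ, hτ]
  have hs : (volume K.S).toReal / (b - a) = K.density := by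
    rw [K.volume_S, ENNReal.toReal_ofReal K.mass_nonneg]; rfl
  refine ⟨K.f, fun x => ⟨K.f_nonneg x, K.f_le_one x⟩, fun x => K.f_eq_zero,
    fun x => K.f_eq_one, fun x hx => hs ▸ K.density_le_f hx, fun l hsl hl₁ => ?_⟩
  obtain ⟨N, J, hconn, hdisjJ, hunion, hvol, hcap⟩ :=
    K.exists_levelSet_decomposition (hs ▸ hsl) hl₁
  refine ⟨N, J, hconn, hdisjJ, hunion, hvol, fun k => ?_⟩
  obtain ⟨T, hT⟩ := hcap k
  refine ⟨Finset.univ.filter fun j => (τ j : ℕ) ∈ T, ?_⟩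
  rw [hT, K.biUnion_seg_eq τ T]
  simp_rw [hτ]

/-- Lemma 5.2: given an interval `I = (a,b)` and `S = ⋃ⱼ Sⱼ ⊆ I` a finite union
of pairwise disjoint open intervals, there is `f : ℝ → [0,1]` supported in `I`
with `f = 1` on `S`, `f ≥ |S|/|I|` on `I`, and such that for every
`|S|/|I| < λ ≤ 1` the level set `{f ≥ λ}` is a finite disjoint union of
intervals `J_k` with `|S ∩ J_k| = λ|J_k|` and `J_k ∩ S` a union of some `Sⱼ`. -/
theorem stmt_15 (a b : ℝ) (hab : a < b) (m : ℕ) (hm : 0 < m)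
    (c d : Fin m → ℝ) (hcd : ∀ j, c j < d j)
    (hsub : ∀ j, Set.Ioo (c j) (d j) ⊆ Set.Ioo a b)
    (hdisj : Pairwise (onFun Disjoint fun j => Set.Ioo (c j) (d j)))
    (S : Set ℝ) (hS : S = ⋃ j, Set.Ioo (c j) (d j)) :
    ∃ f : ℝ → ℝ,
      (∀ x, 0 ≤ f x ∧ f x ≤ 1) ∧
      (∀ x ∉ Set.Ioo a b, f x = 0) ∧
      (∀ x ∈ S, f x = 1) ∧
      (∀ x ∈ Set.Ioo a b, (volume S).toReal / (b - a) ≤ f x) ∧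
      ∀ l : ℝ, (volume S).toReal / (b - a) < l → l ≤ 1 →
        ∃ (K : ℕ) (J : Fin K → Set ℝ),
          (∀ k, (J k).OrdConnected) ∧
          Pairwise (onFun Disjoint J) ∧
          {x | l ≤ f x} = ⋃ k, J k ∧
          (∀ k, volume (S ∩ J k) = ENNReal.ofReal l * volume (J k)) ∧
          (∀ k, ∃ T : Finset (Fin m), J k ∩ S = ⋃ j ∈ T, Set.Ioo (c j) (d j)) :=
  stmt_15_general a b hab m c d hcd hsub hdisj S hS
end

section
/- Fix p > 1 and suppose that for every finite family of disjoint intervals (I_j) and finite unions of intervals S_j ⊆ I_j with |I_j| = s|S_j| (s > 1 fixed for all j), one has W(u(⋃ I_j)) ≤ C (1 + log s)^{1−p} s^p · W(u(⋃ S_j)). Then there exist C' > 0 and q < p such that W̄_u(t) ≤ C' t^q for all t > 1, where W̄_u(t) is the supremum of W(u(⋃ I_j))/W(u(⋃ S_j)) over such configurations with |I_j| = t|S_j|. -/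
open MeasureTheory Function
open scoped ENNReal

/-- From the bound `W(u(⋃ Iⱼ)) ≤ C (1 + log s)^{1-p} s^p W(u(⋃ Sⱼ))` on every
configuration with `|Iⱼ| = s|Sⱼ|` (`p > 1`), one gets `W̄_u(t) ≤ C' t^q` for some
`q < p`.  (Monotonicity and submultiplicativity of `W̄_u` may be assumed.) -/
theorem stmt_16 (u w W : ℝ → ℝ) (p C : ℝ) (hp : 1 < p) (hC : 0 < C)
    (hu : ∀ x, 0 < u x) (huloc : LocallyIntegrable u)
    (hw : ∀ t > (0 : ℝ), 0 ≤ w t)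
    (hW : ∀ t, W t = ∫ s in Set.Ioc (0 : ℝ) t, w s)
    (hWpos : ∀ t > (0 : ℝ), 0 < W t)
    (hmono : MonotoneOn (WbarU u W) (Set.Ici 1))
    (hsubm : ∀ l m : ℝ, 1 ≤ l → 1 ≤ m →
      WbarU u W (l * m) ≤ WbarU u W l * WbarU u W m)
    (hbound : ∀ s : ℝ, 1 < s → ∀ q ∈ configRatios u W s,
      q ≤ ENNReal.ofReal (C * (1 + Real.log s) ^ (1 - p) * s ^ p)) :
    ∃ C' > (0 : ℝ), ∃ q < p, ∀ t > (1 : ℝ),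
      WbarU u W t ≤ ENNReal.ofReal (C' * t ^ q) := by
  set m : ℝ := max 1 (C ^ (1 / (p - 1))) with hmdef
  have hm1 : (1 : ℝ) ≤ m := le_max_left _ _
  have hm0 : (0 : ℝ) < m := lt_of_lt_of_le one_pos hm1
  have hp1 : (0 : ℝ) < p - 1 := by linarith
  -- C < (1+m)^(p-1)
  have hClt : C < (1 + m) ^ (p - 1) := by
    have h1 : C ^ (1 / (p - 1)) ≤ m := le_max_right _ _
    have h2 : (C ^ (1 / (p - 1))) ^ (p - 1) ≤ m ^ (p - 1) :=
      Real.rpow_le_rpow (Real.rpow_nonneg hC.le _) h1 hp1.le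
    have h3 : (C ^ (1 / (p - 1))) ^ (p - 1) = C := by
      rw [← Real.rpow_mul hC.le, one_div_mul_cancel hp1.ne', Real.rpow_one]
    have h4 : m ^ (p - 1) < (1 + m) ^ (p - 1) :=
      Real.rpow_lt_rpow hm0.le (by linarith) hp1
    rw [h3] at h2
    linarith
  have hs1 : (1 : ℝ) < Real.exp m := Real.one_lt_exp_iff.mpr hm0
  have h1m : (0 : ℝ) < 1 + m := by linarith
  set A : ℝ := C * (1 + m) ^ (1 - p) * Real.exp m ^ p with hAdef
  have hA0 : 0 < A := by
    have t1 := Real.rpow_pos_of_pos h1m (1 - p)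
    have t2 := Real.rpow_pos_of_pos (Real.exp_pos m) p
    positivity
  have hexp_mp : Real.exp m ^ p = Real.exp (p * m) := by
    rw [mul_comm p m, Real.exp_mul]
  have hpow_pos : (0 : ℝ) < (1 + m) ^ (p - 1) := Real.rpow_pos_of_pos h1m _
  have hfrac : C * (1 + m) ^ (1 - p) < 1 := by
    have e1 : (1 : ℝ) - p = -(p - 1) := by ring
    rw [e1, Real.rpow_neg h1m.le, ← div_eq_mul_inv]
    exact (div_lt_one hpow_pos).mpr hClt
  have hAlt : A < Real.exp (p * m) := by
    have := mul_lt_mul_of_pos_right hfrac (Real.exp_pos (p * m))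
    rw [one_mul] at this
    calc A = C * (1 + m) ^ (1 - p) * Real.exp (p * m) := by rw [hAdef, hexp_mp]
    _ < Real.exp (p * m) := this
  -- key bound at s₀ = exp m
  have hphi : WbarU u W (Real.exp m) ≤ ENNReal.ofReal A := by
    refine sSup_le (fun r hr => ?_)
    have := hbound (Real.exp m) hs1 r hr
    rwa [Real.log_exp] at this
  set B : ℝ := max A 1 with hBdef
  have hB1 : (1 : ℝ) ≤ B := le_max_right _ _
  have hB0 : (0 : ℝ) < B := lt_of_lt_of_le one_pos hB1
  have hBlt : B < Real.exp (p * m) := by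
    have h1lt : (1 : ℝ) < Real.exp (p * m) :=
      Real.one_lt_exp_iff.mpr (by positivity)
    exact max_lt hAlt h1lt
  set q : ℝ := Real.log B / m with hqdef
  have hq0 : 0 ≤ q := div_nonneg (Real.log_nonneg hB1) hm0.le
  have hqm : q * m = Real.log B := by
    rw [hqdef]; field_simp
  have hqlt : q < p := by
    have : Real.log B < p * m := by
      have := Real.log_lt_log hB0 hBlt
      rwa [Real.log_exp] at this
    rw [hqdef, div_lt_iff₀ hm0]
    linarith
  have hBexp : B = Real.exp (q * m) := by
    rw [hqm, Real.exp_log hB0]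
  have hphiB : WbarU u W (Real.exp m) ≤ ENNReal.ofReal B :=
    hphi.trans (ENNReal.ofReal_le_ofReal (le_max_left _ _))
  -- iteration: φ(exp(k·m)) ≤ (ofReal B)^k for k ≥ 1
  have key : ∀ k : ℕ, 1 ≤ k →
      WbarU u W (Real.exp (k * m)) ≤ ENNReal.ofReal B ^ k := by
    intro k hk
    induction k with
    | zero => omega
    | succ n ih =>
      rcases Nat.eq_or_lt_of_le hk with h1 | h1
      · simp only [← h1]
        simpa using hphiB
      · have hn1 : 1 ≤ n := by omega
        have hexp1 : (1 : ℝ) ≤ Real.exp (n * m) :=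
          Real.one_le_exp (by positivity)
        have hsplit : Real.exp ((n + 1 : ℕ) * m) = Real.exp (n * m) * Real.exp m := by
          rw [← Real.exp_add]
          push_cast
          ring_nf
        rw [hsplit]
        calc WbarU u W (Real.exp (n * m) * Real.exp m)
            ≤ WbarU u W (Real.exp (n * m)) * WbarU u W (Real.exp m) :=
              hsubm _ _ hexp1 hs1.le
          _ ≤ ENNReal.ofReal B ^ n * ENNReal.ofReal B :=
              mul_le_mul' (ih hn1) hphiB
          _ = ENNReal.ofReal B ^ (n + 1) := (pow_succ _ _).symm
  refine ⟨B, hB0, q, hqlt, fun t ht => ?_⟩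
  have ht0 : (0 : ℝ) < t := by linarith
  have hlogt : 0 < Real.log t := Real.log_pos ht
  set k : ℕ := ⌈Real.log t / m⌉₊ with hkdef
  have hk1 : 1 ≤ k := by
    rw [hkdef]
    exact Nat.one_le_ceil_iff.mpr (by positivity)
  have hkge : Real.log t ≤ k * m := by
    have := Nat.le_ceil (Real.log t / m)
    rw [← hkdef] at this
    calc Real.log t = (Real.log t / m) * m := by field_simp
      _ ≤ k * m := mul_le_mul_of_nonneg_right this hm0.le
  have hkle : (k : ℝ) * m ≤ m + Real.log t := by
    have hcl : (k : ℝ) < Real.log t / m + 1 := by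
      rw [hkdef]
      exact Nat.ceil_lt_add_one (by positivity)
    have := mul_le_mul_of_nonneg_right hcl.le hm0.le
    calc (k : ℝ) * m ≤ (Real.log t / m + 1) * m := this
      _ = m + Real.log t := by field_simp; ring
  have htle : t ≤ Real.exp (k * m) := by
    calc t = Real.exp (Real.log t) := (Real.exp_log ht0).symm
      _ ≤ Real.exp (k * m) := Real.exp_le_exp.mpr hkge
  have hmem1 : t ∈ Set.Ici (1 : ℝ) := le_of_lt ht
  have hmem2 : Real.exp ((k : ℝ) * m) ∈ Set.Ici (1 : ℝ) :=
    Real.one_le_exp (by positivity)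
  calc WbarU u W t ≤ WbarU u W (Real.exp (k * m)) := hmono hmem1 hmem2 htle
    _ ≤ ENNReal.ofReal B ^ k := key k hk1
    _ = ENNReal.ofReal (B ^ k) := (ENNReal.ofReal_pow hB0.le k).symm
    _ ≤ ENNReal.ofReal (B * t ^ q) := by
        apply ENNReal.ofReal_le_ofReal
        have hBk : B ^ k = Real.exp ((k : ℝ) * (q * m)) := by
          rw [hBexp, Real.exp_nat_mul]
        have htq : t ^ q = Real.exp (Real.log t * q) := Real.rpow_def_of_pos ht0 q
        rw [hBk, hBexp, htq, ← Real.exp_add, Real.exp_le_exp]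
        nlinarith [mul_le_mul_of_nonneg_left hkle hq0]
end

section
/- Let φ : [1, ∞) → (0, ∞) be increasing and submultiplicative, and suppose φ(t) ≤ C (1 + log t)^{-a} t^p for all t > 1, where a > 0 and p > 0. Then there exist C' > 0 and q < p with φ(t) ≤ C' t^q for all t > 1. -/
/-- If `φ` is increasing and submultiplicative on `[1,∞)` and
`φ(t) ≤ C (1 + log t)^{-a} t^p` for all `t > 1` (`a, p > 0`), then
`φ(t) ≤ C' t^q` for some `q < p`. -/
theorem stmt_17 (φ : ℝ → ℝ) (C a p : ℝ)
    (hpos : ∀ t, 1 ≤ t → 0 < φ t)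
    (hmono : MonotoneOn φ (Set.Ici 1))
    (hsub : ∀ t s, 1 ≤ t → 1 ≤ s → φ (t * s) ≤ φ t * φ s)
    (hC : 0 < C) (ha : 0 < a) (hp : 0 < p)
    (hbd : ∀ t > (1 : ℝ), φ t ≤ C * (1 + Real.log t) ^ (-a) * t ^ p) :
    ∃ C' > (0 : ℝ), ∃ q < p, ∀ t > (1 : ℝ), φ t ≤ C' * t ^ q := by
  classical
  set t₀ : ℝ := Real.exp (max (C ^ (1/a)) 1) with ht₀def
  have hlogt₀ : Real.log t₀ = max (C ^ (1/a)) 1 := Real.log_exp _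
  have hlogpos : 0 < Real.log t₀ := by
    rw [hlogt₀]; exact lt_of_lt_of_le one_pos (le_max_right _ _)
  have ht₀1 : 1 < t₀ := by
    rw [ht₀def, Real.one_lt_exp_iff]
    exact lt_of_lt_of_le one_pos (le_max_right _ _)
  have ht₀pos : (0:ℝ) < t₀ := lt_trans one_pos ht₀1
  have hφt₀pos : 0 < φ t₀ := hpos t₀ ht₀1.le
  -- φ t₀ < t₀ ^ p
  have ht₀p : φ t₀ < t₀ ^ p := by
    have h1 := hbd t₀ ht₀1
    have hL : 0 < 1 + Real.log t₀ := by linarith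
    have h2 : C < (1 + Real.log t₀) ^ a := by
      have hCa : C ^ (1/a) < 1 + Real.log t₀ := by
        rw [hlogt₀]
        have := le_max_left (C ^ (1/a)) 1
        linarith
      have hCapos : (0:ℝ) ≤ C ^ (1/a) := Real.rpow_nonneg hC.le _
      have := Real.rpow_lt_rpow hCapos hCa ha
      rwa [← Real.rpow_mul hC.le, one_div, inv_mul_cancel₀ (ne_of_gt ha),
        Real.rpow_one] at this
    have h3 : C * (1 + Real.log t₀) ^ (-a) < 1 := by
      rw [Real.rpow_neg hL.le]
      rw [mul_inv_lt_iff₀ (Real.rpow_pos_of_pos hL a), one_mul]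
      exact h2
    have htp : (0:ℝ) < t₀ ^ p := Real.rpow_pos_of_pos ht₀pos p
    calc φ t₀ ≤ C * (1 + Real.log t₀) ^ (-a) * t₀ ^ p := h1
      _ < 1 * t₀ ^ p := by exact mul_lt_mul_of_pos_right h3 htp
      _ = t₀ ^ p := one_mul _
  set q : ℝ := Real.log (φ t₀) / Real.log t₀ with hqdef
  have hq : t₀ ^ q = φ t₀ := by
    rw [Real.rpow_def_of_pos ht₀pos, hqdef, mul_comm,
      div_mul_cancel₀ _ (ne_of_gt hlogpos), Real.exp_log hφt₀pos]
  have hqp : q < p := by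
    rw [hqdef, div_lt_iff₀ hlogpos]
    have := Real.log_lt_log hφt₀pos ht₀p
    rwa [Real.log_rpow ht₀pos] at this
  -- key induction
  have key : ∀ n : ℕ, ∀ t : ℝ, t₀ ^ n < t → t ≤ t₀ ^ (n+1) → φ t ≤ (φ t₀) ^ (n+1) := by
    intro n
    induction n with
    | zero =>
      intro t h1 h2
      simp only [pow_zero, zero_add, pow_one] at h1 h2 ⊢
      exact hmono (Set.mem_Ici.mpr h1.le) (Set.mem_Ici.mpr ht₀1.le) h2
    | succ m ih =>
      intro t h1 h2
      have hpow1 : (1:ℝ) ≤ t₀ ^ m := one_le_pow₀ ht₀1.le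
      have hs1 : t₀ ^ m < t / t₀ := by
        rw [lt_div_iff₀ ht₀pos, ← pow_succ]
        exact h1
      have hs2 : t / t₀ ≤ t₀ ^ (m+1) := by
        rw [div_le_iff₀ ht₀pos, ← pow_succ]
        exact h2
      have h1s : 1 ≤ t / t₀ := le_of_lt (lt_of_le_of_lt hpow1 hs1)
      have hmul := hsub t₀ (t / t₀) ht₀1.le h1s
      rw [mul_div_cancel₀ _ (ne_of_gt ht₀pos)] at hmul
      calc φ t ≤ φ t₀ * φ (t / t₀) := hmul
        _ ≤ φ t₀ * φ t₀ ^ (m+1) :=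
          mul_le_mul_of_nonneg_left (ih _ hs1 hs2) hφt₀pos.le
        _ = φ t₀ ^ (m+2) := by ring
  refine ⟨max (t₀ ^ q) 1, lt_of_lt_of_le one_pos (le_max_right _ _), q, hqp, ?_⟩
  intro t ht
  have htpos : (0:ℝ) < t := lt_trans one_pos ht
  have htq : (0:ℝ) < t ^ q := Real.rpow_pos_of_pos htpos q
  have hex : ∃ n : ℕ, t ≤ t₀ ^ (n+1) := by
    obtain ⟨n, hn⟩ := pow_unbounded_of_one_lt t ht₀1
    exact ⟨n, hn.le.trans (pow_le_pow_right₀ ht₀1.le (Nat.le_succ n))⟩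
  obtain ⟨n, hn, hlow⟩ : ∃ n : ℕ, t ≤ t₀ ^ (n+1) ∧ t₀ ^ n < t := by
    refine ⟨Nat.find hex, Nat.find_spec hex, ?_⟩
    cases h : Nat.find hex with
    | zero => simpa using ht
    | succ m =>
      have hmin := Nat.find_min hex (m := m) (by omega)
      push_neg at hmin
      exact hmin
  have hφ : φ t ≤ φ t₀ ^ (n+1) := key n t hlow hn
  have heq : (φ t₀ : ℝ) ^ (n+1) = t₀ ^ (q * (n+1 : ℕ)) := by
    rw [← hq, ← Real.rpow_natCast (t₀ ^ q) (n+1), ← Real.rpow_mul ht₀pos.le]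
  rcases le_or_gt 0 q with hq0 | hq0
  · have : t₀ ^ (q * (n+1 : ℕ)) = t₀ ^ q * (t₀ ^ n) ^ q := by
      rw [← Real.rpow_natCast t₀ n, ← Real.rpow_mul ht₀pos.le,
        ← Real.rpow_add ht₀pos]
      push_cast
      ring_nf
    have hbase : (t₀ ^ n : ℝ) ^ q ≤ t ^ q :=
      Real.rpow_le_rpow (pow_nonneg ht₀pos.le n) hlow.le hq0
    calc φ t ≤ φ t₀ ^ (n+1) := hφ
      _ = t₀ ^ q * (t₀ ^ n) ^ q := by rw [heq, this]
      _ ≤ t₀ ^ q * t ^ q := mul_le_mul_of_nonneg_left hbase (Real.rpow_pos_of_pos ht₀pos q).le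
      _ ≤ max (t₀ ^ q) 1 * t ^ q :=
        mul_le_mul_of_nonneg_right (le_max_left _ _) htq.le
  · have : t₀ ^ (q * (n+1 : ℕ)) = (t₀ ^ (n+1) : ℝ) ^ q := by
      rw [← Real.rpow_natCast t₀ (n+1), ← Real.rpow_mul ht₀pos.le, mul_comm]
    have hbase : (t₀ ^ (n+1) : ℝ) ^ q ≤ t ^ q :=
      Real.rpow_le_rpow_of_nonpos htpos hn hq0.le
    calc φ t ≤ φ t₀ ^ (n+1) := hφ
      _ = (t₀ ^ (n+1) : ℝ) ^ q := by rw [heq, this]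
      _ ≤ t ^ q := hbase
      _ ≤ max (t₀ ^ q) 1 * t ^ q := by
        nlinarith [le_max_right (t₀ ^ q) (1:ℝ), htq]
end

section
/- Let w be a weight on (0, ∞) in the class B_p (i.e., r^p ∫_r^∞ w(t)/t^p dt ≤ C ∫₀^r w(s) ds for all r > 0) with p > 0. Then there exists q < p such that W̄(t) := sup_{s>0} W(st)/W(s) satisfies W̄(t) ≤ C' t^q for all t > 1, where W(t) = ∫₀ᵗ w. -/
/-!
The function `F(r) = W(r)/r^p + ∫_r^∞ w(t) t^{-p} dt` is nonincreasing: on `(a, b]` the tail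
integral loses at least `(W(b) - W(a))/b^p`, which pays for the growth of `W(r)/r^p`. Comparing
`F(2s)` with `F(s)` the same way shows that `F` drops by at least `(1 - 2^{-p}) W(s)/s^p`, and
`B_p` says exactly that `F(s) ≤ (1 + C) W(s)/s^p`; hence `F(2s) ≤ θ F(s)` for a fixed `θ < 1`.
Iterating over dyadic scales gives `F(st) ≲ t^{log₂ θ} F(s)`, and since `F(r) ≍ W(r)/r^p` this is
`W(st)/W(s) ≲ t^{p + log₂ θ}`.
-/

open MeasureTheory
open scoped ENNReal

/-- The dilation quantity `W̄(t) = sup_{s>0} W(st)/W(s)`. -/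
noncomputable def WbarDil (W : ℝ → ℝ) (t : ℝ) : ℝ≥0∞ :=
  sSup {q | ∃ s > (0 : ℝ), q = ENNReal.ofReal (W (s * t) / W s)}

open Set Real

section DoublingContraction

variable {F : ℝ → ℝ} {θ : ℝ}

theorem apply_two_pow_mul_le (hθ : 0 ≤ θ) (hF : ∀ s > 0, F (2 * s) ≤ θ * F s) (n : ℕ)
    {s : ℝ} (hs : 0 < s) : F (2 ^ n * s) ≤ θ ^ n * F s := by
  induction n with
  | zero => simp
  | succ n ih =>
    calc F (2 ^ (n + 1) * s) = F (2 * (2 ^ n * s)) := by ring_nf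
      _ ≤ θ * F (2 ^ n * s) := hF _ (by positivity)
      _ ≤ θ * (θ ^ n * F s) := mul_le_mul_of_nonneg_left ih hθ
      _ = θ ^ (n + 1) * F s := by ring

theorem pow_le_inv_mul_rpow_logb (hθ0 : 0 < θ) (hθ1 : θ ≤ 1) {n : ℕ} {t : ℝ} (ht : 0 < t)
    (htn : t < 2 ^ (n + 1)) : θ ^ n ≤ θ⁻¹ * t ^ logb 2 θ := by
  have hlog : logb 2 t ≤ n + 1 :=
    ((logb_lt_iff_lt_rpow one_lt_two ht).2 (by exact_mod_cast htn)).le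
  have hswap : t ^ logb 2 θ = θ ^ logb 2 t := by
    rw [rpow_def_of_pos ht, rpow_def_of_pos hθ0, logb, logb, mul_div_left_comm]
  calc θ ^ n = θ⁻¹ * θ ^ ((n : ℝ) + 1) := by
        rw [rpow_add_one hθ0.ne', rpow_natCast]
        field_simp
    _ ≤ θ⁻¹ * θ ^ logb 2 t := by
        gcongr _ * ?_
        exact rpow_le_rpow_of_exponent_ge hθ0 hθ1 hlog
    _ = θ⁻¹ * t ^ logb 2 θ := by rw [hswap]

theorem AntitoneOn.le_inv_mul_rpow_logb_mul (hanti : AntitoneOn F (Ioi 0))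
    (hnonneg : ∀ s > 0, 0 ≤ F s) (hθ0 : 0 < θ) (hθ1 : θ ≤ 1)
    (hF : ∀ s > 0, F (2 * s) ≤ θ * F s) {s t : ℝ} (hs : 0 < s) (ht : 1 ≤ t) :
    F (s * t) ≤ θ⁻¹ * t ^ logb 2 θ * F s := by
  obtain ⟨n, h2n, htn⟩ := exists_nat_pow_near ht one_lt_two
  calc F (s * t) ≤ F (2 ^ n * s) :=
        hanti (show (0 : ℝ) < 2 ^ n * s by positivity) (by simp only [mem_Ioi]; positivity)
          (by nlinarith)
    _ ≤ θ ^ n * F s := apply_two_pow_mul_le hθ0.le hF n hs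
    _ ≤ θ⁻¹ * t ^ logb 2 θ * F s :=
        mul_le_mul_of_nonneg_right (pow_le_inv_mul_rpow_logb hθ0 hθ1 (by linarith) htn)
          (hnonneg s hs)

end DoublingContraction

section BpWeight

variable {w W : ℝ → ℝ} {p : ℝ}

noncomputable def tailIntegral (w : ℝ → ℝ) (p r : ℝ) : ℝ :=
  ∫ t in Ioi r, w t / t ^ p

noncomputable def bpMajorant (w W : ℝ → ℝ) (p r : ℝ) : ℝ :=
  W r / r ^ p + tailIntegral w p r

theorem setIntegral_Ioc_zero_nonneg (hw : ∀ t > (0 : ℝ), 0 ≤ w t) (r : ℝ) :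
    0 ≤ ∫ t in Ioc 0 r, w t :=
  setIntegral_nonneg measurableSet_Ioc fun t ht => hw t ht.1

theorem tailIntegral_nonneg (hw : ∀ t > (0 : ℝ), 0 ≤ w t) {r : ℝ} (hr : 0 < r) :
    0 ≤ tailIntegral w p r :=
  setIntegral_nonneg measurableSet_Ioi fun t ht =>
    div_nonneg (hw t (hr.trans ht)) (rpow_nonneg (hr.trans ht).le p)

theorem tailIntegral_eq_integral_Ioc_add
    (hint : ∀ r > (0 : ℝ), IntegrableOn (fun t => w t / t ^ p) (Ioi r)) {a b : ℝ} (ha : 0 < a)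
    (hab : a ≤ b) : tailIntegral w p a = (∫ t in Ioc a b, w t / t ^ p) + tailIntegral w p b := by
  rw [tailIntegral, tailIntegral, ← setIntegral_union (Ioc_disjoint_Ioi le_rfl) measurableSet_Ioi
    ((hint a ha).mono_set Ioc_subset_Ioi_self) (hint b (ha.trans_le hab)),
    Ioc_union_Ioi_eq_Ioi hab]

theorem integral_Ioc_eq_sub (hwint : ∀ r > (0 : ℝ), IntegrableOn w (Ioc 0 r))
    (hW : ∀ t, W t = ∫ s in Ioc (0 : ℝ) t, w s) {a b : ℝ} (ha : 0 < a) (hab : a ≤ b) :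
    ∫ t in Ioc a b, w t = W b - W a := by
  have hwab : IntegrableOn w (Ioc a b) :=
    (hwint b (ha.trans_le hab)).mono_set (Ioc_subset_Ioc_left ha.le)
  rw [hW, hW, ← Ioc_union_Ioc_eq_Ioc ha.le hab, setIntegral_union (Ioc_disjoint_Ioc_of_le le_rfl)
    measurableSet_Ioc (hwint a ha) hwab, add_sub_cancel_left]

theorem sub_div_rpow_le_integral_Ioc (hp : 0 ≤ p) (hw : ∀ t > (0 : ℝ), 0 ≤ w t)
    (hwint : ∀ r > (0 : ℝ), IntegrableOn w (Ioc 0 r)) (hW : ∀ t, W t = ∫ s in Ioc (0 : ℝ) t, w s)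
    (hint : ∀ r > (0 : ℝ), IntegrableOn (fun t => w t / t ^ p) (Ioi r)) {a b : ℝ} (ha : 0 < a)
    (hab : a ≤ b) : (W b - W a) / b ^ p ≤ ∫ t in Ioc a b, w t / t ^ p := by
  rw [← integral_Ioc_eq_sub hwint hW ha hab, ← integral_div]
  refine setIntegral_mono_on
    (((hwint b (ha.trans_le hab)).mono_set (Ioc_subset_Ioc_left ha.le)).div_const _)
    ((hint a ha).mono_set Ioc_subset_Ioi_self) measurableSet_Ioc fun t ht => ?_
  have ht0 : 0 < t := ha.trans ht.1
  exact div_le_div_of_nonneg_left (hw t ht0) (rpow_pos_of_pos ht0 p)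
    (rpow_le_rpow ht0.le ht.2 hp)

theorem bpMajorant_add_le (hp : 0 ≤ p) (hw : ∀ t > (0 : ℝ), 0 ≤ w t)
    (hwint : ∀ r > (0 : ℝ), IntegrableOn w (Ioc 0 r)) (hW : ∀ t, W t = ∫ s in Ioc (0 : ℝ) t, w s)
    (hint : ∀ r > (0 : ℝ), IntegrableOn (fun t => w t / t ^ p) (Ioi r)) {a b : ℝ} (ha : 0 < a)
    (hab : a ≤ b) :
    bpMajorant w W p b + (W a / a ^ p - W a / b ^ p) ≤ bpMajorant w W p a := by
  have hchunk := sub_div_rpow_le_integral_Ioc hp hw hwint hW hint ha hab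
  rw [sub_div] at hchunk
  rw [bpMajorant, bpMajorant, tailIntegral_eq_integral_Ioc_add hint ha hab]
  linarith

theorem bpMajorant_antitoneOn (hp : 0 ≤ p) (hw : ∀ t > (0 : ℝ), 0 ≤ w t)
    (hwint : ∀ r > (0 : ℝ), IntegrableOn w (Ioc 0 r)) (hW : ∀ t, W t = ∫ s in Ioc (0 : ℝ) t, w s)
    (hint : ∀ r > (0 : ℝ), IntegrableOn (fun t => w t / t ^ p) (Ioi r)) :
    AntitoneOn (bpMajorant w W p) (Ioi 0) := by
  intro a (ha : 0 < a) b _ hab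
  have hdecr : W a / b ^ p ≤ W a / a ^ p :=
    div_le_div_of_nonneg_left (hW a ▸ setIntegral_Ioc_zero_nonneg hw a) (rpow_pos_of_pos ha p)
      (rpow_le_rpow ha.le hab hp)
  linarith [bpMajorant_add_le hp hw hwint hW hint ha hab]

theorem div_rpow_le_bpMajorant (hw : ∀ t > (0 : ℝ), 0 ≤ w t) {r : ℝ} (hr : 0 < r) :
    W r / r ^ p ≤ bpMajorant w W p r :=
  le_add_of_nonneg_right (tailIntegral_nonneg hw hr)

theorem bpMajorant_nonneg (hw : ∀ t > (0 : ℝ), 0 ≤ w t)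
    (hW : ∀ t, W t = ∫ s in Ioc (0 : ℝ) t, w s) {r : ℝ} (hr : 0 < r) : 0 ≤ bpMajorant w W p r :=
  (div_nonneg (hW r ▸ setIntegral_Ioc_zero_nonneg hw r) (rpow_nonneg hr.le p)).trans
    (div_rpow_le_bpMajorant hw hr)

theorem bpMajorant_le {C r : ℝ} (hr : 0 < r) (hBp : r ^ p * tailIntegral w p r ≤ C * W r) :
    bpMajorant w W p r ≤ (1 + C) * (W r / r ^ p) := by
  have htail : tailIntegral w p r ≤ C * (W r / r ^ p) := by
    rw [← mul_div_assoc, le_div_iff₀ (rpow_pos_of_pos hr p), mul_comm]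
    exact hBp
  rw [bpMajorant]
  linarith

noncomputable def bpContraction (p C : ℝ) : ℝ :=
  1 - (1 - 2 ^ (-p)) / (1 + C)

theorem bpContraction_pos {C : ℝ} (hC : 0 ≤ C) : 0 < bpContraction p C := by
  rw [bpContraction, sub_pos, div_lt_one (by linarith)]
  linarith [rpow_pos_of_pos two_pos (-p)]

theorem bpContraction_le_one (hp : 0 ≤ p) {C : ℝ} (hC : 0 ≤ C) : bpContraction p C ≤ 1 := by
  have hgap : 0 ≤ 1 - (2 : ℝ) ^ (-p) :=
    sub_nonneg.2 (rpow_le_one_of_one_le_of_nonpos one_le_two (neg_nonpos.2 hp))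
  rw [bpContraction, sub_le_self_iff]
  positivity

theorem bpContraction_lt_one (hp : 0 < p) {C : ℝ} (hC : 0 ≤ C) : bpContraction p C < 1 := by
  have hgap : 0 < 1 - (2 : ℝ) ^ (-p) :=
    sub_pos.2 (rpow_lt_one_of_one_lt_of_neg one_lt_two (neg_neg_of_pos hp))
  rw [bpContraction, sub_lt_self_iff]
  positivity

theorem bpMajorant_two_mul_le (hp : 0 ≤ p) (hw : ∀ t > (0 : ℝ), 0 ≤ w t)
    (hwint : ∀ r > (0 : ℝ), IntegrableOn w (Ioc 0 r)) (hW : ∀ t, W t = ∫ s in Ioc (0 : ℝ) t, w s)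
    (hint : ∀ r > (0 : ℝ), IntegrableOn (fun t => w t / t ^ p) (Ioi r)) {C s : ℝ} (hC : 0 ≤ C)
    (hs : 0 < s) (hBp : s ^ p * tailIntegral w p s ≤ C * W s) :
    bpMajorant w W p (2 * s) ≤ bpContraction p C * bpMajorant w W p s := by
  have hdrop := bpMajorant_add_le hp hw hwint hW hint hs (by linarith : s ≤ 2 * s)
  have hscale : W s / (2 * s) ^ p = 2 ^ (-p) * (W s / s ^ p) := by
    rw [mul_rpow zero_le_two hs.le, rpow_neg zero_le_two]
    field_simp
  have hmaj : bpMajorant w W p s / (1 + C) ≤ W s / s ^ p := by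
    rw [div_le_iff₀ (by linarith)]
    linarith [bpMajorant_le hs hBp]
  have hgap : 0 ≤ 1 - (2 : ℝ) ^ (-p) :=
    sub_nonneg.2 (rpow_le_one_of_one_le_of_nonpos one_le_two (neg_nonpos.2 hp))
  calc bpMajorant w W p (2 * s) ≤ bpMajorant w W p s - (1 - 2 ^ (-p)) * (W s / s ^ p) := by
        rw [hscale] at hdrop
        linarith
    _ ≤ bpMajorant w W p s - (1 - 2 ^ (-p)) * (bpMajorant w W p s / (1 + C)) := by gcongr
    _ = bpContraction p C * bpMajorant w W p s := by
        rw [bpContraction]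
        ring

theorem div_le_mul_rpow_of_div_rpow_le {K s t : ℝ} (hs : 0 < s) (ht : 0 < t) (hWs : 0 < W s)
    (h : W (s * t) / (s * t) ^ p ≤ K * (W s / s ^ p)) : W (s * t) / W s ≤ K * t ^ p := by
  rw [div_le_iff₀ (rpow_pos_of_pos (mul_pos hs ht) p), mul_rpow hs.le ht.le] at h
  rw [div_le_iff₀ hWs]
  calc W (s * t) ≤ K * (W s / s ^ p) * (s ^ p * t ^ p) := h
    _ = K * t ^ p * W s := by field_simp

theorem div_rpow_le_rpow_logb_mul_div_rpow (hp : 0 ≤ p) {C : ℝ} (hC : 0 ≤ C)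
    (hw : ∀ t > (0 : ℝ), 0 ≤ w t) (hwint : ∀ r > (0 : ℝ), IntegrableOn w (Ioc 0 r))
    (hW : ∀ t, W t = ∫ s in Ioc (0 : ℝ) t, w s)
    (hint : ∀ r > (0 : ℝ), IntegrableOn (fun t => w t / t ^ p) (Ioi r))
    (hBp : ∀ r > (0 : ℝ), r ^ p * tailIntegral w p r ≤ C * W r) {s t : ℝ} (hs : 0 < s)
    (ht : 1 ≤ t) :
    W (s * t) / (s * t) ^ p ≤
      (1 + C) / bpContraction p C * t ^ logb 2 (bpContraction p C) * (W s / s ^ p) := by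
  set θ := bpContraction p C
  have hθ0 : 0 < θ := bpContraction_pos hC
  have hdecay : bpMajorant w W p (s * t) ≤ θ⁻¹ * t ^ logb 2 θ * bpMajorant w W p s :=
    (bpMajorant_antitoneOn hp hw hwint hW hint).le_inv_mul_rpow_logb_mul
      (fun r hr => bpMajorant_nonneg hw hW hr) hθ0 (bpContraction_le_one hp hC)
      (fun r hr => bpMajorant_two_mul_le hp hw hwint hW hint hC hr (hBp r hr)) hs ht
  calc W (s * t) / (s * t) ^ p ≤ bpMajorant w W p (s * t) :=
        div_rpow_le_bpMajorant hw (by positivity)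
    _ ≤ θ⁻¹ * t ^ logb 2 θ * bpMajorant w W p s := hdecay
    _ ≤ θ⁻¹ * t ^ logb 2 θ * ((1 + C) * (W s / s ^ p)) := by
        gcongr
        exact bpMajorant_le hs (hBp s hs)
    _ = (1 + C) / θ * t ^ logb 2 θ * (W s / s ^ p) := by ring

end BpWeight

/-- Ariño–Muckenhoupt: if `w ∈ B_p` (`p > 0`), i.e.
`r^p ∫_r^∞ w(t)/t^p dt ≤ C W(r)` for all `r > 0`, then `W̄(t) ≤ C' t^q` for
every `t > 1`, for some `q < p`. -/
theorem stmt_18 (w W : ℝ → ℝ) (p C : ℝ) (hp : 0 < p) (hC : 0 < C)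
    (hw : ∀ t > (0 : ℝ), 0 ≤ w t)
    (hwint : ∀ r > (0 : ℝ), IntegrableOn w (Set.Ioc 0 r))
    (hW : ∀ t, W t = ∫ s in Set.Ioc (0 : ℝ) t, w s)
    (hWpos : ∀ t > (0 : ℝ), 0 < W t)
    (hint : ∀ r > (0 : ℝ), IntegrableOn (fun t => w t / t ^ p) (Set.Ioi r))
    (hBp : ∀ r > (0 : ℝ), r ^ p * (∫ t in Set.Ioi r, w t / t ^ p) ≤ C * W r) :
    ∃ C' > (0 : ℝ), ∃ q < p, ∀ t > (1 : ℝ),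
      WbarDil W t ≤ ENNReal.ofReal (C' * t ^ q) := by
  set θ := bpContraction p C
  have hθ0 : 0 < θ := bpContraction_pos hC.le
  refine ⟨(1 + C) / θ, by positivity, p + logb 2 θ,
    by linarith [logb_neg one_lt_two hθ0 (bpContraction_lt_one hp hC.le)],
    fun t ht => sSup_le ?_⟩
  rintro _ ⟨s, hs, rfl⟩
  have ht0 : 0 < t := by linarith
  refine ENNReal.ofReal_le_ofReal ?_
  calc W (s * t) / W s ≤ (1 + C) / θ * t ^ logb 2 θ * t ^ p :=
        div_le_mul_rpow_of_div_rpow_le hs ht0 (hWpos s hs)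
          (div_rpow_le_rpow_logb_mul_div_rpow hp.le hC.le hw hwint hW hint hBp hs ht.le)
    _ = (1 + C) / θ * t ^ (p + logb 2 θ) := by
        rw [rpow_add ht0]
        ring
end
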